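/- arXiv:2306.14224 — 10 statements merged into one kernel-verified Lean document; each statement's English description precedes it below -/
import Mathlib

section
/- Let Δ ∈ [0,1) and let Φ be a self-map of the space of bounded continuous functions on E such that ‖Φw₁ − Φw₂‖_sp ≤ Δ‖w₁ − w₂‖_sp for all w₁, w₂, where ‖·‖_sp is the span seminorm. Then there exists a bounded continuous function w and a constant λ such that Φw = w + λ (i.e., Φw(x) − w(x) = λ for all x), and moreover ‖w‖_sp ≤ (1/(1−Δ)) · ‖Φ0‖_sp if the fixed point is obtained as the limit of iterates starting from 0. -/
open BoundedContinuousFunction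

/-- The span seminorm `‖f‖_sp = sup f − inf f` of a bounded continuous function. -/
noncomputable def spanSeminorm {E : Type*} [TopologicalSpace E]
    (f : E →ᵇ ℝ) : ℝ :=
  sSup (Set.range f) - sInf (Set.range f)

open Bornology Filter

section spanLemmas
variable {E : Type*} [TopologicalSpace E] [Nonempty E]

lemma sub_le_span (f : E →ᵇ ℝ) (x y : E) : f x - f y ≤ spanSeminorm f := by
  have hA := (isBounded_iff_bddBelow_bddAbove.mp f.isBounded_range).2
  have hB := (isBounded_iff_bddBelow_bddAbove.mp f.isBounded_range).1
  have h1 : f x ≤ sSup (Set.range f) := le_csSup hA ⟨x, rfl⟩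
  have h2 : sInf (Set.range f) ≤ f y := csInf_le hB ⟨y, rfl⟩
  unfold spanSeminorm; linarith

lemma span_le {f : E →ᵇ ℝ} {c : ℝ} (h : ∀ x y, f x - f y ≤ c) : spanSeminorm f ≤ c := by
  have hB := (isBounded_iff_bddBelow_bddAbove.mp f.isBounded_range).1
  unfold spanSeminorm
  rw [sub_le_iff_le_add]
  apply csSup_le (Set.range_nonempty f)
  rintro _ ⟨x, rfl⟩
  have : f x - c ≤ sInf (Set.range f) := by
    apply le_csInf (Set.range_nonempty f)
    rintro _ ⟨y, rfl⟩
    linarith [h x y]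
  linarith

lemma span_nonneg (f : E →ᵇ ℝ) : 0 ≤ spanSeminorm f := by
  have x := Classical.arbitrary E
  have := sub_le_span f x x; linarith

lemma span_congr {f g : E →ᵇ ℝ} (c : ℝ) (h : ∀ x, f x = g x + c) :
    spanSeminorm f = spanSeminorm g := by
  apply le_antisymm
  · exact span_le fun x y => by rw [h x, h y]; linarith [sub_le_span g x y]
  · exact span_le fun x y => by have := sub_le_span f x y; rw [h x, h y] at this; linarith

lemma span_add_le (f g : E →ᵇ ℝ) :
    spanSeminorm (f + g) ≤ spanSeminorm f + spanSeminorm g :=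
  span_le fun x y => by
    have h1 := sub_le_span f x y
    have h2 := sub_le_span g x y
    simp only [coe_add, Pi.add_apply]
    linarith

lemma span_neg (f : E →ᵇ ℝ) : spanSeminorm (-f) = spanSeminorm f := by
  apply le_antisymm
  · exact span_le fun x y => by
      simp only [coe_neg, Pi.neg_apply]; linarith [sub_le_span f y x]
  · exact span_le fun x y => by
      have := sub_le_span (-f) y x
      simp only [coe_neg, Pi.neg_apply] at this; linarith

lemma span_sub_comm (f g : E →ᵇ ℝ) :
    spanSeminorm (f - g) = spanSeminorm (g - f) := by
  rw [← neg_sub g f, span_neg]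

lemma norm_le_span {f : E →ᵇ ℝ} {x₀ : E} (h : f x₀ = 0) : ‖f‖ ≤ spanSeminorm f := by
  rw [norm_le (span_nonneg f)]
  intro x
  rw [Real.norm_eq_abs, abs_le]
  constructor
  · have := sub_le_span f x₀ x; rw [h] at this; linarith
  · have := sub_le_span f x x₀; rw [h] at this; linarith

lemma span_le_two_norm (f : E →ᵇ ℝ) : spanSeminorm f ≤ 2 * ‖f‖ :=
  span_le fun x y => by
    have h1 := f.norm_coe_le_norm x
    have h2 := f.norm_coe_le_norm y
    rw [Real.norm_eq_abs] at h1 h2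
    have := abs_nonneg (f x)
    have := le_abs_self (f x)
    have := neg_abs_le (f y)
    linarith

lemma span_zero : spanSeminorm (0 : E →ᵇ ℝ) = 0 :=
  le_antisymm (span_le fun x y => by simp) (span_nonneg 0)

end spanLemmas

/-- If `Φ` is a self-map of the bounded continuous functions on a (nonempty) metric
space `E` which is a contraction with constant `Δ < 1` in the span seminorm, then
there are a bounded continuous `w` and a constant `λ` with `Φw = w + λ`, and
`‖w‖_sp ≤ (1/(1−Δ)) ‖Φ0‖_sp`. -/
theorem span_contraction_fixed_point
    {E : Type*} [MetricSpace E] [Nonempty E]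
    (Δ : ℝ) (hΔ0 : 0 ≤ Δ) (hΔ1 : Δ < 1)
    (Φ : (E →ᵇ ℝ) → (E →ᵇ ℝ))
    (hΦ : ∀ w₁ w₂ : E →ᵇ ℝ,
      spanSeminorm (Φ w₁ - Φ w₂) ≤ Δ * spanSeminorm (w₁ - w₂)) :
    ∃ (w : E →ᵇ ℝ) (lam : ℝ),
      (∀ x : E, Φ w x = w x + lam) ∧
      spanSeminorm w ≤ (1 - Δ)⁻¹ * spanSeminorm (Φ 0) := by
  obtain ⟨x₀⟩ := ‹Nonempty E›
  set C := spanSeminorm (Φ 0) with hC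
  have hC0 : 0 ≤ C := span_nonneg _
  -- normalized map T
  set T : (E →ᵇ ℝ) → (E →ᵇ ℝ) :=
    fun v => Φ v - BoundedContinuousFunction.const E (Φ v x₀) with hTdef
  have hT0 : ∀ v, T v x₀ = 0 := fun v => by simp [hTdef]
  have hTspan : ∀ v₁ v₂, spanSeminorm (T v₁ - T v₂) ≤ Δ * spanSeminorm (v₁ - v₂) := by
    intro v₁ v₂
    have heq : spanSeminorm (T v₁ - T v₂) = spanSeminorm (Φ v₁ - Φ v₂) :=
      span_congr (-(Φ v₁ x₀) + Φ v₂ x₀) (fun x => by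
        simp [hTdef]; ring)
    rw [heq]; exact hΦ v₁ v₂
  -- iterates
  set u : ℕ → (E →ᵇ ℝ) := fun n => T^[n] 0 with hudef
  have hu0 : u 0 = 0 := rfl
  have huS : ∀ n, u (n + 1) = T (u n) := fun n => Function.iterate_succ_apply' T n 0
  have hux₀ : ∀ n, u n x₀ = 0 := by
    intro n
    cases n with
    | zero => simp [hu0]
    | succ n => rw [huS]; exact hT0 _
  have hdspan : ∀ n, spanSeminorm (u (n + 1) - u n) ≤ Δ ^ n * C := by
    intro n
    induction n with
    | zero =>
      simp only [pow_zero, one_mul, hu0, sub_zero]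
      have heq : spanSeminorm (u 1) = spanSeminorm (Φ 0) :=
        span_congr (-(Φ 0 x₀)) (fun x => by
          rw [show u 1 = T (u 0) from huS 0, hu0]
          simp [hTdef]; ring)
      rw [heq]
    | succ n ih =>
      have h := hTspan (u (n + 1)) (u n)
      rw [← huS n] at h
      rw [← huS (n + 1)] at h
      calc spanSeminorm (u (n + 1 + 1) - u (n + 1)) ≤ Δ * spanSeminorm (u (n + 1) - u n) := h
        _ ≤ Δ * (Δ ^ n * C) := mul_le_mul_of_nonneg_left ih hΔ0
        _ = Δ ^ (n + 1) * C := by ring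
  have hdist : ∀ n, dist (u n) (u (n + 1)) ≤ C * Δ ^ n := by
    intro n
    rw [dist_eq_norm]
    have hz : (u n - u (n + 1)) x₀ = 0 := by simp [hux₀]
    calc ‖u n - u (n + 1)‖ ≤ spanSeminorm (u n - u (n + 1)) := norm_le_span hz
      _ = spanSeminorm (u (n + 1) - u n) := span_sub_comm _ _
      _ ≤ Δ ^ n * C := hdspan n
      _ = C * Δ ^ n := mul_comm _ _
  have hcauchy : CauchySeq u := cauchySeq_of_le_geometric Δ C hΔ1 hdist
  obtain ⟨w, hw⟩ := cauchySeq_tendsto_of_complete hcauchy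
  have hd0 : Tendsto (fun n => dist (u n) w) atTop (nhds 0) :=
    tendsto_iff_dist_tendsto_zero.mp hw
  -- w vanishes at x₀
  have hwx₀ : w x₀ = 0 := by
    have hb : ∀ n, |w x₀| ≤ dist (u n) w := by
      intro n
      have : |w x₀| = ‖(w - u n) x₀‖ := by
        simp [hux₀ n, Real.norm_eq_abs]
      rw [this]
      calc ‖(w - u n) x₀‖ ≤ ‖w - u n‖ := (w - u n).norm_coe_le_norm x₀
        _ = dist (u n) w := by rw [dist_comm, dist_eq_norm]
    have := ge_of_tendsto' hd0 hb
    have h2 := abs_nonneg (w x₀)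
    have : |w x₀| = 0 := le_antisymm this h2
    exact abs_eq_zero.mp this
  -- T w = w
  have hfix : T w = w := by
    have key : ∀ n, ‖T w - w‖ ≤ 2 * Δ * dist (u n) w + dist (u (n + 1)) w := by
      intro n
      have h1 : ‖T w - T (u n)‖ ≤ 2 * Δ * dist (u n) w := by
        have hz : (T w - T (u n)) x₀ = 0 := by simp [hT0]
        calc ‖T w - T (u n)‖ ≤ spanSeminorm (T w - T (u n)) := norm_le_span hz
          _ ≤ Δ * spanSeminorm (w - u n) := hTspan _ _
          _ ≤ Δ * (2 * ‖w - u n‖) :=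
            mul_le_mul_of_nonneg_left (span_le_two_norm _) hΔ0
          _ = 2 * Δ * dist (u n) w := by rw [dist_comm, dist_eq_norm]; ring
      have h2 : ‖T (u n) - w‖ = dist (u (n + 1)) w := by
        rw [← huS n, dist_eq_norm]
      have h3 : dist (T w) w ≤ dist (T w) (T (u n)) + dist (T (u n)) w :=
        dist_triangle _ _ _
      rw [dist_eq_norm, dist_eq_norm, dist_eq_norm] at h3
      rw [h2] at h3
      linarith
    have hd0' : Tendsto (fun n => dist (u (n + 1)) w) atTop (nhds 0) :=
      hd0.comp (tendsto_add_atTop_nat 1)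
    have hlim : Tendsto (fun n => 2 * Δ * dist (u n) w + dist (u (n + 1)) w)
        atTop (nhds 0) := by
      have := (hd0.const_mul (2 * Δ)).add hd0'
      simpa using this
    have hle : ‖T w - w‖ ≤ 0 := ge_of_tendsto' hlim key
    have := norm_le_zero_iff.mp hle
    exact sub_eq_zero.mp this
  refine ⟨w, Φ w x₀, ?_, ?_⟩
  · intro x
    have h := congrArg (fun f : E →ᵇ ℝ => f x) hfix
    simp only [hTdef, BoundedContinuousFunction.coe_sub, Pi.sub_apply,
      BoundedContinuousFunction.const_apply] at h
    linarith
  · -- span bound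
    have hsum : ∀ n : ℕ, (∑ k ∈ Finset.range n, Δ ^ k) ≤ (1 - Δ)⁻¹ := by
      intro n
      have h2 : (0:ℝ) < 1 - Δ := by linarith
      rw [geom_sum_eq (by linarith : Δ ≠ 1)]
      rw [show (Δ ^ n - 1) / (Δ - 1) = (1 - Δ ^ n) / (1 - Δ) by
        rw [div_eq_div_iff (ne_of_lt (by linarith)) (ne_of_gt h2)]; ring]
      rw [inv_eq_one_div, div_le_div_iff₀ h2 h2]
      nlinarith [pow_nonneg hΔ0 n]
    have hspan_u : ∀ n, spanSeminorm (u n) ≤ (1 - Δ)⁻¹ * C := by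
      intro n
      have hsum' : spanSeminorm (u n) ≤ (∑ k ∈ Finset.range n, Δ ^ k) * C := by
        induction n with
        | zero => simp [hu0, span_zero]
        | succ n ih =>
          have hdecomp : u (n + 1) = u n + (u (n + 1) - u n) := by abel
          calc spanSeminorm (u (n + 1)) = spanSeminorm (u n + (u (n + 1) - u n)) := by
                rw [← hdecomp]
            _ ≤ spanSeminorm (u n) + spanSeminorm (u (n + 1) - u n) := span_add_le _ _
            _ ≤ (∑ k ∈ Finset.range n, Δ ^ k) * C + Δ ^ n * C := by
                linarith [hdspan n]
            _ = (∑ k ∈ Finset.range (n + 1), Δ ^ k) * C := by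
                rw [Finset.sum_range_succ]; ring
      calc spanSeminorm (u n) ≤ (∑ k ∈ Finset.range n, Δ ^ k) * C := hsum'
        _ ≤ (1 - Δ)⁻¹ * C := mul_le_mul_of_nonneg_right (hsum n) hC0
    have key : ∀ n, spanSeminorm w ≤ (1 - Δ)⁻¹ * C + 2 * dist (u n) w := by
      intro n
      have hdecomp : w = u n + (w - u n) := by abel
      have h1 : spanSeminorm w ≤ spanSeminorm (u n) + spanSeminorm (w - u n) := by
        calc spanSeminorm w = spanSeminorm (u n + (w - u n)) := by rw [← hdecomp]
          _ ≤ _ := span_add_le _ _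
      have h2 : spanSeminorm (w - u n) ≤ 2 * ‖w - u n‖ := span_le_two_norm _
      have h3 : ‖w - u n‖ = dist (u n) w := by rw [dist_comm, dist_eq_norm]
      rw [h3] at h2
      linarith [hspan_u n]
    have hlim : Tendsto (fun n => (1 - Δ)⁻¹ * C + 2 * dist (u n) w)
        atTop (nhds ((1 - Δ)⁻¹ * C)) := by
      have := (hd0.const_mul 2).const_add ((1 - Δ)⁻¹ * C)
      simpa using this
    exact ge_of_tendsto' hlim key
end

section
/- Let P₁, P₂ be probability measures on a measurable space E with sup_{D} (P₁(D) − P₂(D)) ≤ Δ < 1, and let w be a bounded measurable function with span seminorm ‖w‖_sp. Then log(∫ e^w dP₁) − log(∫ e^w dP₂) ≤ log(e^{‖w‖_sp} Δ + 1). -/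
/-!
Write `P₁ - P₂` for the truncated difference of measures. Since `P₁ ≤ P₂ + (P₁ - P₂)` and, by the
Hahn decomposition, `(P₁ - P₂)(E) = P₁(D) - P₂(D) ≤ Δ` for a measurable `D`, integrating
`0 ≤ e^w ≤ e^{sup w}` gives `∫e^w dP₁ - ∫e^w dP₂ ≤ e^{sup w} Δ`. As `∫e^w dP₂ ≥ e^{inf w}`, the right
side is at most `e^{‖w‖_sp} Δ ∫e^w dP₂`; divide and take logarithms.
-/

open MeasureTheory Real

namespace MeasureTheory.Measure

variable {α : Type*} [MeasurableSpace α] {μ ν : Measure α} [IsFiniteMeasure μ] [IsFiniteMeasure ν]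

theorem add_sub_eq_add_sub : μ + (ν - μ) = ν + (μ - ν) := by
  have h := sub_toSignedMeasure_eq_toSignedMeasure_sub (μ := μ) (ν := ν)
  rw [sub_eq_sub_iff_add_eq_add] at h
  rw [← toSignedMeasure_eq_toSignedMeasure_iff, toSignedMeasure_add, toSignedMeasure_add, h,
    add_comm]

theorem le_add_sub : μ ≤ ν + (μ - ν) :=
  add_sub_eq_add_sub (μ := μ) (ν := ν) ▸ Measure.le_add_right le_rfl

theorem exists_measureReal_sub_univ_eq :
    ∃ D, MeasurableSet D ∧ (μ - ν).real Set.univ = μ.real D - ν.real D := by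
  obtain ⟨s, hs⟩ := exists_isHahnDecomposition μ ν
  have hs0 : (μ - ν).real s = 0 := by
    simp [measureReal_def, sub_apply_eq_zero_of_isHahnDecomposition hs]
  have hsc : μ.real sᶜ = ν.real sᶜ + (μ - ν).real sᶜ := by
    have := congrArg (· sᶜ) (add_sub_eq_add_sub (μ := μ) (ν := ν))
    simp only [add_apply, sub_apply_eq_zero_of_isHahnDecomposition hs.compl, add_zero] at this
    rw [measureReal_def, this, ENNReal.toReal_add (by finiteness) (by finiteness)]; rfl
  refine ⟨sᶜ, hs.measurableSet.compl, ?_⟩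
  rw [← measureReal_add_measureReal_compl hs.measurableSet, hs0]
  linarith

theorem integral_sub_integral_le_mul_measureReal_sub {f : α → ℝ} {K : ℝ} (hf : Measurable f)
    (hf0 : ∀ x, 0 ≤ f x) (hfK : ∀ x, f x ≤ K) :
    ∫ x, f x ∂μ - ∫ x, f x ∂ν ≤ K * (μ - ν).real Set.univ := by
  have hint (ρ : Measure α) [IsFiniteMeasure ρ] : Integrable f ρ :=
    .of_bound hf.aestronglyMeasurable K (ae_of_all _ fun x => by
      rw [Real.norm_of_nonneg (hf0 x)]; exact hfK x)
  have hbound : ∫ x, f x ∂(μ - ν) ≤ K * (μ - ν).real Set.univ := by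
    calc ∫ x, f x ∂(μ - ν) ≤ ∫ _, K ∂(μ - ν) :=
          integral_mono (hint _) (integrable_const K) hfK
      _ = K * (μ - ν).real Set.univ := by rw [integral_const, smul_eq_mul, mul_comm]
  have hmono : ∫ x, f x ∂μ ≤ ∫ x, f x ∂ν + ∫ x, f x ∂(μ - ν) := by
    rw [← integral_add_measure (hint _) (hint _)]
    exact integral_mono_measure le_add_sub (ae_of_all _ hf0) (hint _)
  linarith

end MeasureTheory.Measure

theorem Real.log_sub_log_le_log_add_one {a b c : ℝ} (ha : 0 < a) (hb : 0 < b)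
    (h : a - b ≤ c * b) : log a - log b ≤ log (c + 1) := by
  rw [← log_div ha.ne' hb.ne']
  exact log_le_log (div_pos ha hb) (by rw [div_le_iff₀ hb]; linarith)

theorem log_laplace_span_estimate_general
    {E : Type*} [MeasurableSpace E]
    (P₁ P₂ : Measure E) [IsProbabilityMeasure P₁] [IsProbabilityMeasure P₂]
    (Δ : ℝ) (hΔ0 : 0 ≤ Δ)
    (hΔ : ∀ D : Set E, MeasurableSet D → (P₁ D).toReal - (P₂ D).toReal ≤ Δ)
    (w : E → ℝ) (hwm : Measurable w) (C : ℝ) (hwb : ∀ x, |w x| ≤ C) :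
    Real.log (∫ y, Real.exp (w y) ∂P₁) - Real.log (∫ y, Real.exp (w y) ∂P₂)
      ≤ Real.log
          (Real.exp (sSup (Set.range w) - sInf (Set.range w)) * Δ + 1) := by
  set M := sSup (Set.range w)
  set m := sInf (Set.range w)
  have hM (x : E) : w x ≤ M :=
    le_csSup ⟨C, Set.forall_mem_range.2 fun y => (abs_le.1 (hwb y)).2⟩ ⟨x, rfl⟩
  have hm (x : E) : m ≤ w x :=
    csInf_le ⟨-C, Set.forall_mem_range.2 fun y => (abs_le.1 (hwb y)).1⟩ ⟨x, rfl⟩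
  have hint (P : Measure E) [IsFiniteMeasure P] : Integrable (fun y => exp (w y)) P :=
    .of_bound hwm.exp.aestronglyMeasurable (exp M) (ae_of_all _ fun x => by
      rw [Real.norm_of_nonneg (exp_pos _).le]; exact exp_le_exp.2 (hM x))
  have hgap : ∫ y, exp (w y) ∂P₁ - ∫ y, exp (w y) ∂P₂ ≤ exp M * Δ := by
    obtain ⟨D, hD, hPD⟩ := Measure.exists_measureReal_sub_univ_eq (μ := P₁) (ν := P₂)
    calc _ ≤ exp M * (P₁ - P₂).real Set.univ :=
          Measure.integral_sub_integral_le_mul_measureReal_sub hwm.exp (fun x => (exp_pos _).le)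
            fun x => exp_le_exp.2 (hM x)
      _ ≤ exp M * Δ := by gcongr; rw [hPD]; exact hΔ D hD
  have hlow : exp m ≤ ∫ y, exp (w y) ∂P₂ := by
    simpa using integral_mono (integrable_const (exp m)) (hint P₂) fun x => exp_le_exp.2 (hm x)
  refine log_sub_log_le_log_add_one (integral_exp_pos (hint P₁)) (integral_exp_pos (hint P₂)) ?_
  calc _ ≤ exp M * Δ := hgap
    _ = exp (M - m) * Δ * exp m := by rw [mul_right_comm, ← exp_add, sub_add_cancel]
    _ ≤ exp (M - m) * Δ * ∫ y, exp (w y) ∂P₂ := by gcongr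

/-- If `P₁, P₂` are probability measures with `P₁(D) − P₂(D) ≤ Δ < 1` for all
measurable `D`, and `w` is bounded measurable, then
`log ∫ e^w dP₁ − log ∫ e^w dP₂ ≤ log(e^{‖w‖_sp} Δ + 1)`, where
`‖w‖_sp = sup w − inf w`. -/
theorem log_laplace_span_estimate
    {E : Type*} [MeasurableSpace E]
    (P₁ P₂ : Measure E) [IsProbabilityMeasure P₁] [IsProbabilityMeasure P₂]
    (Δ : ℝ) (hΔ0 : 0 ≤ Δ) (hΔ1 : Δ < 1)
    (hΔ : ∀ D : Set E, MeasurableSet D → (P₁ D).toReal - (P₂ D).toReal ≤ Δ)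
    (w : E → ℝ) (hwm : Measurable w) (C : ℝ) (hwb : ∀ x, |w x| ≤ C) :
    Real.log (∫ y, Real.exp (w y) ∂P₁) - Real.log (∫ y, Real.exp (w y) ∂P₂)
      ≤ Real.log
          (Real.exp (sSup (Set.range w) - sInf (Set.range w)) * Δ + 1) :=
  log_laplace_span_estimate_general P₁ P₂ Δ hΔ0 hΔ w hwm C hwb
end

section
/- Suppose the family of probability measures {P^a(x,·) : x ∈ E, a ∈ U} satisfies the uniform ergodicity condition sup_{x,x',a,a',D} (P^a(x,D) − P^{a'}(x',D)) = Δ < 1. For a bounded measurable w with ‖w‖_sp ≤ M, define the Gibbs measures μ_{x,a,w}(B) = (∫_B e^w dP^a(x,·))/(∫_E e^w dP^a(x,·)). Then sup over w₁,w₂ with span ≤ M, over x,x' ∈ E, a,a' ∈ U, and measurable B, of (μ_{x,a,w₁}(B) − μ_{x',a',w₂}(B)) is strictly less than 1. -/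
/-!
The Gibbs measure `μ_{x,a,w}` is the exponential tilt of `P^a(x,·)` by `w`. Comparing `e^{w y}`
with `e^{w z}` and integrating in `z` shows that a tilt by a function of span at most `M` is
minorized by `e^{-M}` times the original measure. Applied to `B` and to `Bᶜ`, this gives
`μ_{x,a,w₁}(B) - μ_{x',a',w₂}(B) ≤ 1 - e^{-M} (1 - (P^a(x,B) - P^{a'}(x',B))) ≤ 1 - e^{-M} (1 - Δ)`.
-/

open MeasureTheory Real

namespace MeasureTheory

variable {E : Type*} [MeasurableSpace E] {μ : Measure E} {w : E → ℝ} {M : ℝ}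

lemma integrable_exp_of_forall_sub_le [IsFiniteMeasure μ] (hw : Measurable w)
    (hM : ∀ y z, w y - w z ≤ M) : Integrable (fun y ↦ exp (w y)) μ := by
  rcases isEmpty_or_nonempty E with _ | ⟨⟨z₀⟩⟩
  · exact .of_bound hw.exp.aestronglyMeasurable 0 (ae_of_all _ fun y ↦ isEmptyElim y)
  · refine .of_bound hw.exp.aestronglyMeasurable (exp (w z₀ + M)) (ae_of_all _ fun y ↦ ?_)
    rw [norm_of_nonneg (exp_pos _).le, exp_le_exp]
    linarith [hM y z₀]

namespace Measure

lemma tilted_real_apply [SFinite μ] (w : E → ℝ) (B : Set E) :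
    (μ.tilted w).real B = (∫ y in B, exp (w y) ∂μ) / ∫ y, exp (w y) ∂μ := by
  rw [measureReal_def, tilted_apply_eq_ofReal_integral, integral_div,
    ENNReal.toReal_ofReal (div_nonneg (integral_nonneg fun _ ↦ (exp_pos _).le)
      (integral_nonneg fun _ ↦ (exp_pos _).le))]

lemma exp_neg_mul_measureReal_le_tilted_real [IsProbabilityMeasure μ] (hw : Measurable w)
    (hM : ∀ y z, w y - w z ≤ M) (B : Set E) :
    exp (-M) * μ.real B ≤ (μ.tilted w).real B := by
  have hint := integrable_exp_of_forall_sub_le (μ := μ) hw hM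
  have hpos : 0 < ∫ y, exp (w y) ∂μ := integral_exp_pos hint
  have pointwise : ∀ z, exp (-M) * exp (w z) * μ.real B ≤ ∫ y in B, exp (w y) ∂μ := by
    intro z
    calc exp (-M) * exp (w z) * μ.real B = ∫ _ in B, exp (-M) * exp (w z) ∂μ := by
          rw [setIntegral_const, smul_eq_mul, mul_comm]
      _ ≤ ∫ y in B, exp (w y) ∂μ := by
          refine integral_mono (integrable_const _) hint.integrableOn fun y ↦ ?_
          rw [← exp_add, exp_le_exp]
          linarith [hM z y]
  have integrated : exp (-M) * μ.real B * ∫ z, exp (w z) ∂μ ≤ ∫ y in B, exp (w y) ∂μ :=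
    calc exp (-M) * μ.real B * ∫ z, exp (w z) ∂μ
        = ∫ z, exp (-M) * exp (w z) * μ.real B ∂μ := by
          rw [integral_mul_const, integral_const_mul]; ring
      _ ≤ ∫ _, ∫ y in B, exp (w y) ∂μ ∂μ :=
          integral_mono ((hint.const_mul _).mul_const _) (integrable_const _) pointwise
      _ = ∫ y in B, exp (w y) ∂μ := by simp
  rwa [tilted_real_apply, le_div_iff₀ hpos]

end Measure

/-- Doeblin's minorization bound. -/
lemma measureReal_sub_le_of_minorized {μ₁ μ₂ ν₁ ν₂ : Measure E} [IsProbabilityMeasure μ₁]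
    [IsProbabilityMeasure ν₁] {c Δ : ℝ} (hc : 0 ≤ c)
    (h₁ : ∀ B, MeasurableSet B → c * μ₁.real B ≤ ν₁.real B)
    (h₂ : ∀ B, MeasurableSet B → c * μ₂.real B ≤ ν₂.real B)
    {B : Set E} (hB : MeasurableSet B) (hΔ : μ₁.real B - μ₂.real B ≤ Δ) :
    ν₁.real B - ν₂.real B ≤ 1 - c * (1 - Δ) := by
  have upper : ν₁.real B ≤ 1 - c * (1 - μ₁.real B) := by
    have := h₁ Bᶜ hB.compl
    rw [probReal_compl_eq_one_sub hB, probReal_compl_eq_one_sub hB] at this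
    linarith
  nlinarith [h₂ B hB]

end MeasureTheory

/-- Under the uniform ergodicity condition `sup (P^a(x,D) − P^{a'}(x',D)) = Δ < 1`,
the Gibbs measures `μ_{x,a,w}(B) = (∫_B e^w dP^a(x,·))/(∫ e^w dP^a(x,·))` built from
bounded measurable `w` with span seminorm at most `M` satisfy a uniform gap:
`sup (μ_{x,a,w₁}(B) − μ_{x',a',w₂}(B)) < 1`. -/
theorem gibbs_measures_uniform_gap
    {E U : Type*} [MeasurableSpace E]
    (P : E → U → Measure E) (hP : ∀ x a, IsProbabilityMeasure (P x a))
    (Δ : ℝ) (hΔ1 : Δ < 1)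
    (hΔ : ∀ (x x' : E) (a a' : U) (D : Set E), MeasurableSet D →
      ((P x a) D).toReal - ((P x' a') D).toReal ≤ Δ)
    (M : ℝ) :
    ∃ Δ' : ℝ, Δ' < 1 ∧
      ∀ (w₁ w₂ : E → ℝ), Measurable w₁ → Measurable w₂ →
        (∀ y z, w₁ y - w₁ z ≤ M) → (∀ y z, w₂ y - w₂ z ≤ M) →
        ∀ (x x' : E) (a a' : U) (B : Set E), MeasurableSet B →
          (∫ y in B, Real.exp (w₁ y) ∂(P x a)) / (∫ y, Real.exp (w₁ y) ∂(P x a))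
            - (∫ y in B, Real.exp (w₂ y) ∂(P x' a')) /
                (∫ y, Real.exp (w₂ y) ∂(P x' a'))
          ≤ Δ' := by
  refine ⟨1 - exp (-M) * (1 - Δ), by nlinarith [exp_pos (-M)], ?_⟩
  intro w₁ w₂ hw₁ hw₂ hM₁ hM₂ x x' a a' B hB
  have := hP x a
  have := hP x' a'
  have := isProbabilityMeasure_tilted (integrable_exp_of_forall_sub_le (μ := P x a) hw₁ hM₁)
  rw [← Measure.tilted_real_apply, ← Measure.tilted_real_apply]
  exact measureReal_sub_le_of_minorized (exp_pos _).le
    (fun D _ ↦ Measure.exp_neg_mul_measureReal_le_tilted_real hw₁ hM₁ D)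
    (fun D _ ↦ Measure.exp_neg_mul_measureReal_le_tilted_real hw₂ hM₂ D) hB (hΔ x x' a a' B hB)
end

section
/- Suppose for all bounded continuous functions w and all x, x' ∈ E, a ∈ U: ∫ e^w dP^a(x,·) ≤ K · ∫ e^w dP^a(x',·) with K < ∞. Then for every x, x' ∈ E and a ∈ U, the measure P^a(x,·) is absolutely continuous with respect to P^a(x',·) with Radon–Nikodym density bounded above by K (and by symmetry bounded below by 1/K). -/
/-!
Testing condition (B.1) against `w = -n · min (dist(·, F), 1)` and letting `n → ∞` gives, by
dominated convergence, `P^a(x, F) ≤ K · P^a(x', F)` for every closed set `F`; finite measures on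
a metrizable space are regular, so the inequality passes to all Borel sets, which is the
statement `P^a(x, ·) ≤ K • P^a(x', ·)`. Exchanging `x` and `x'` gives the lower bound.
-/

open MeasureTheory BoundedContinuousFunction Metric Filter Topology

section PseudoMetric

variable {E : Type*} [PseudoMetricSpace E]

theorem IsClosed.exists_tendsto_exp_indicator {F : Set E} (hF : IsClosed F) :
    ∃ w : ℕ → E →ᵇ ℝ, (∀ n, w n ≤ 0) ∧
      ∀ y, Tendsto (fun n ↦ Real.exp (w n y)) atTop (𝓝 (F.indicator 1 y)) := by
  -- `infDist y ∅ = 0`, so the empty set needs its own sequence.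
  rcases F.eq_empty_or_nonempty with rfl | hFne
  · refine ⟨fun n ↦ const E (-(n : ℝ)), fun n y ↦ ?_, fun y ↦ ?_⟩
    · simp
    · simp only [const_apply, Set.indicator_empty]
      exact Real.tendsto_exp_neg_atTop_nhds_zero.comp tendsto_natCast_atTop_atTop
  set d : E → ℝ := fun y ↦ min (infDist y F) 1
  have hd_cont : Continuous d := (continuous_infDist_pt F).min continuous_const
  have hd_nonneg : ∀ y, 0 ≤ d y := fun y ↦ le_min infDist_nonneg zero_le_one
  have hd_bound : ∀ (n : ℕ) y, ‖-(n : ℝ) * d y‖ ≤ n := fun n y ↦ by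
    rw [norm_mul, norm_neg, Real.norm_natCast, Real.norm_of_nonneg (hd_nonneg y)]
    exact mul_le_of_le_one_right n.cast_nonneg (min_le_right _ _)
  refine ⟨fun n ↦ .ofNormedAddCommGroup (fun y ↦ -(n : ℝ) * d y)
    (continuous_const.mul hd_cont) n (hd_bound n),
    fun n y ↦ ?_, fun y ↦ ?_⟩
  · exact mul_nonpos_of_nonpos_of_nonneg (neg_nonpos.2 n.cast_nonneg) (hd_nonneg y)
  have hexp : ∀ n : ℕ, Real.exp (-(n : ℝ) * d y) = Real.exp (-d y) ^ n := fun n ↦ by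
    rw [neg_mul, ← mul_neg, Real.exp_nat_mul]
  simp only [coe_ofNormedAddCommGroup, hexp]
  by_cases hy : y ∈ F
  · simp [d, infDist_zero_of_mem hy, hy]
  · have hdy : 0 < d y := lt_min ((hF.notMem_iff_infDist_pos hFne).1 hy) one_pos
    rw [Set.indicator_of_notMem hy]
    exact tendsto_pow_atTop_nhds_zero_of_lt_one (Real.exp_nonneg _)
      (Real.exp_lt_one_iff.2 (neg_lt_zero.2 hdy))

variable [MeasurableSpace E] [OpensMeasurableSpace E] {μ ν : Measure E}
  [IsFiniteMeasure μ] [IsFiniteMeasure ν] {K : ℝ}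

theorem measureReal_le_mul_of_forall_integral_exp_le
    (h : ∀ w : E →ᵇ ℝ, ∫ y, Real.exp (w y) ∂μ ≤ K * ∫ y, Real.exp (w y) ∂ν)
    {F : Set E} (hF : IsClosed F) : μ.real F ≤ K * ν.real F := by
  obtain ⟨w, hw_nonpos, hw_lim⟩ := hF.exists_tendsto_exp_indicator
  have hlim : ∀ (ρ : Measure E) [IsFiniteMeasure ρ],
      Tendsto (fun n ↦ ∫ y, Real.exp (w n y) ∂ρ) atTop (𝓝 (ρ.real F)) := fun ρ _ ↦ by
    rw [← integral_indicator_one hF.measurableSet]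
    refine tendsto_integral_of_dominated_convergence (fun _ ↦ 1)
      (fun n ↦ (w n).continuous.rexp.aestronglyMeasurable) (integrable_const 1)
      (fun n ↦ ae_of_all _ fun y ↦ ?_) (ae_of_all _ hw_lim)
    rw [Real.norm_of_nonneg (Real.exp_nonneg _)]
    exact Real.exp_le_one_iff.2 (hw_nonpos n y)
  exact le_of_tendsto_of_tendsto' (hlim μ) ((hlim ν).const_mul K) fun n ↦ h (w n)

end PseudoMetric

theorem MeasureTheory.Measure.le_of_forall_isClosed_le {E : Type*} [TopologicalSpace E]
    [MeasurableSpace E] {μ ν : Measure E} [IsFiniteMeasure μ] [μ.WeaklyRegular]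
    (h : ∀ F, IsClosed F → μ F ≤ ν F) : μ ≤ ν := by
  refine Measure.le_iff.2 fun B hB ↦ ?_
  rw [hB.measure_eq_iSup_isClosed_of_ne_top (measure_ne_top μ B)]
  exact iSup₂_le fun F hFB ↦ iSup_le fun hF ↦ (h F hF).trans (measure_mono hFB)

theorem le_smul_of_forall_integral_exp_le {E : Type*} [PseudoMetricSpace E] [MeasurableSpace E]
    [BorelSpace E] {μ ν : Measure E} [IsFiniteMeasure μ] [IsFiniteMeasure ν] {K : ℝ}
    (h : ∀ w : E →ᵇ ℝ, ∫ y, Real.exp (w y) ∂μ ≤ K * ∫ y, Real.exp (w y) ∂ν) :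
    μ ≤ ENNReal.ofReal K • ν := by
  refine Measure.le_of_forall_isClosed_le fun F hF ↦ ?_
  rw [Measure.smul_apply, smul_eq_mul, ← ofReal_measureReal, ← ofReal_measureReal,
    ← ENNReal.ofReal_mul' measureReal_nonneg]
  exact ENNReal.ofReal_le_ofReal (measureReal_le_mul_of_forall_integral_exp_le h hF)

theorem measureReal_le_mul_of_le_smul {E : Type*} [MeasurableSpace E] {μ ν : Measure E}
    [IsFiniteMeasure ν] {K : ℝ} (hK : 0 ≤ K) (h : μ ≤ ENNReal.ofReal K • ν) (B : Set E) :
    μ.real B ≤ K * ν.real B := by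
  have := ENNReal.toReal_mono (ENNReal.mul_ne_top ENNReal.ofReal_ne_top (measure_ne_top ν B))
    (h B)
  rwa [ENNReal.toReal_ofReal_mul _ _ hK] at this

/-- If `∫ e^w dP^a(x,·) ≤ K ∫ e^w dP^a(x',·)` for all bounded continuous `w`, all
`x, x'` and `a` (condition (B.1)), then each `P^a(x,·)` is absolutely continuous with
respect to `P^a(x',·)` with density bounded above by `K` (equivalently
`P^a(x,B) ≤ K · P^a(x',B)` for all measurable `B`; by symmetry the density is also
bounded below by `1/K`). -/
theorem B1_implies_equivalent_kernels
    {E U : Type*} [TopologicalSpace E] [PolishSpace E]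
    [MeasurableSpace E] [BorelSpace E]
    (P : E → U → Measure E) (hP : ∀ x a, IsProbabilityMeasure (P x a))
    (K : ℝ)
    (hK : ∀ (w : E →ᵇ ℝ) (x x' : E) (a : U),
      (∫ y, Real.exp (w y) ∂(P x a)) ≤ K * ∫ y, Real.exp (w y) ∂(P x' a)) :
    ∀ (x x' : E) (a : U),
      (P x a) ≪ (P x' a) ∧
      (∀ B : Set E, MeasurableSet B →
        ((P x a) B).toReal ≤ K * ((P x' a) B).toReal) ∧
      (∀ B : Set E, MeasurableSet B →
        (1 / K) * ((P x' a) B).toReal ≤ ((P x a) B).toReal) := by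
  intro x x' a
  let := TopologicalSpace.pseudoMetrizableSpacePseudoMetric E
  have hK_pos : 0 < K := one_pos.trans_le (by simpa using hK 0 x x a)
  have hle : P x a ≤ ENNReal.ofReal K • P x' a :=
    le_smul_of_forall_integral_exp_le fun w ↦ hK w x x' a
  have hge : P x' a ≤ ENNReal.ofReal K • P x a :=
    le_smul_of_forall_integral_exp_le fun w ↦ hK w x' x a
  refine ⟨Measure.absolutelyContinuous_of_le_smul hle,
    fun B _ ↦ measureReal_le_mul_of_le_smul hK_pos.le hle B, fun B _ ↦ ?_⟩
  rw [one_div, inv_mul_le_iff₀ hK_pos]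
  exact measureReal_le_mul_of_le_smul hK_pos.le hge B
end

section
/- Let Δ ∈ [0,1), c ≥ 0 a constant with e^c Δ < 1, and let (sₙ) be a nonnegative sequence with s₀ = 0 satisfying s_{n+1} ≤ c + log(e^{sₙ} Δ + 1). Then for every n, sₙ ≤ c − log(1 − Δe^c). -/
/-!
The bound `B = c - log (1 - Δ e^c)` is the fixed point of the monotone map
`x ↦ c + log (e^x Δ + 1)`, since `e^B Δ + 1 = 1 / (1 - Δ e^c)`. It also lies above `s 0 = 0`,
so comparing `s` with the constant sequence `B` keeps `s n ≤ B` for all `n`.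
-/

open Real

namespace RiskSensitive

noncomputable def step (Δ c x : ℝ) : ℝ := c + log (exp x * Δ + 1)

theorem step_monotone {Δ : ℝ} (c : ℝ) (hΔ : 0 ≤ Δ) : Monotone (step Δ c) := fun x y hxy => by
  unfold step
  gcongr

theorem step_fixed_point {Δ c : ℝ} (h : exp c * Δ < 1) :
    step Δ c (c - log (1 - Δ * exp c)) = c - log (1 - Δ * exp c) := by
  have hd : 0 < 1 - Δ * exp c := by linarith
  have hinner : exp (c - log (1 - Δ * exp c)) * Δ + 1 = (1 - Δ * exp c)⁻¹ := by
    rw [exp_sub, exp_log hd, div_mul_eq_mul_div, div_add_one hd.ne']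
    ring
  rw [step, hinner, log_inv]
  ring

theorem zero_le_fixed_point {Δ c : ℝ} (hΔ : 0 ≤ Δ) (hc : 0 ≤ c) (h : exp c * Δ < 1) :
    0 ≤ c - log (1 - Δ * exp c) := by
  have hlog : log (1 - Δ * exp c) ≤ 0 :=
    log_nonpos (by linarith) (by nlinarith [exp_pos c])
  linarith

end RiskSensitive

theorem risk_sensitive_iterate_bound_general
    (Δ c : ℝ) (hΔ0 : 0 ≤ Δ) (hc : 0 ≤ c)
    (hsmall : Real.exp c * Δ < 1)
    (s : ℕ → ℝ) (hs0 : s 0 = 0)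
    (hrec : ∀ n, s (n + 1) ≤ c + Real.log (Real.exp (s n) * Δ + 1)) :
    ∀ n, s n ≤ c - Real.log (1 - Δ * Real.exp c) := by
  intro n
  refine (RiskSensitive.step_monotone c hΔ0).seq_le_seq n
    (y := fun _ => c - log (1 - Δ * exp c)) ?_ (fun k _ => hrec k)
    (fun _ _ => (RiskSensitive.step_fixed_point hsmall).le)
  exact hs0 ▸ RiskSensitive.zero_le_fixed_point hΔ0 hc hsmall

/-- Recursion bound: if `0 ≤ Δ < 1`, `c ≥ 0`, `e^c Δ < 1`, and a nonnegative
sequence `s` with `s 0 = 0` satisfies `s(n+1) ≤ c + log(e^{s n} Δ + 1)`, then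
`s n ≤ c − log(1 − Δ e^c)` for every `n`. -/
theorem risk_sensitive_iterate_bound
    (Δ c : ℝ) (hΔ0 : 0 ≤ Δ) (hΔ1 : Δ < 1) (hc : 0 ≤ c)
    (hsmall : Real.exp c * Δ < 1)
    (s : ℕ → ℝ) (hs0 : s 0 = 0) (hpos : ∀ n, 0 ≤ s n)
    (hrec : ∀ n, s (n + 1) ≤ c + Real.log (Real.exp (s n) * Δ + 1)) :
    ∀ n, s n ≤ c - Real.log (1 - Δ * Real.exp c) :=
  risk_sensitive_iterate_bound_general Δ c hΔ0 hc hsmall s hs0 hrec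
end

section
/- Let (Xₙ) be a Markov chain with transition operator P, φ : ℕ → (0,1] nonincreasing with φ(0)=1, and f : E → [1, d·inf f] a bounded continuous function with sup f ≤ d · inf f. Then for all n, k, x: E_{k,x}[exp(Σ_{i=k}^{n+k-1} φ(i) · log(f(X_{i-k}) / Pf(X_{i-k})))] ≤ d. -/
/-!
Normalising `f` by `c = inf f` does not change the ratios `f / Pf` and puts `g = f / c` in
`[1, d]`. With `r_j = g(X_j) / Pg(X_j)` and `a_j = φ(k + j)`, the process
`Q_m = (∏_{j<m} r_j ^ a_j) · g(X_m) ^ a_m` has nonincreasing expectations: because `g ≥ 1` and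
`a` is nonincreasing, `Q_{m+1} ≤ Q_m · (g(X_{m+1}) / Pg(X_m)) ^ a_m`, Bernoulli's inequality
bounds the last factor by `1 + a_m (g(X_{m+1}) / Pg(X_m) - 1)`, and the conditional expectation
of `g(X_{m+1})` given `ℱ_m` is `Pg(X_m)`. Hence the discounted product, which is at most `Q_n`,
has expectation at most `E Q_0 = E g(X_0) ^ a_0 ≤ d`.
-/

open MeasureTheory ProbabilityTheory

lemma Real.rpow_le_of_le_of_one_le {r d a : ℝ} (hr : 0 ≤ r) (hrd : r ≤ d) (hd : 1 ≤ d)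
    (ha0 : 0 ≤ a) (ha1 : a ≤ 1) : r ^ a ≤ d :=
  calc r ^ a ≤ max r 1 ^ a := Real.rpow_le_rpow hr (le_max_left r 1) ha0
    _ ≤ max r 1 := Real.rpow_le_self_of_one_le (le_max_right r 1) ha1
    _ ≤ d := max_le hrd hd

lemma Real.rpow_le_one_add_mul_sub_one {t a : ℝ} (ht : 0 ≤ t) (ha0 : 0 ≤ a) (ha1 : a ≤ 1) :
    t ^ a ≤ 1 + a * (t - 1) := by
  simpa using rpow_one_add_le_one_add_mul_self (s := t - 1) (by linarith) ha0 ha1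

lemma le_mul_iInf_of_forall_le_mul {E : Type*} {f : E → ℝ} {d : ℝ} (hf : ∀ y, 0 < f y)
    (hfd : ∀ y z, f y ≤ d * f z) (y : E) : f y ≤ d * ⨅ z, f z := by
  have : Nonempty E := ⟨y⟩
  have hd : 0 ≤ d := nonneg_of_mul_nonneg_left ((hf y).le.trans (hfd y y)) (hf y)
  rw [Real.mul_iInf_of_nonneg hd]
  exact le_ciInf (hfd y)

lemma integral_mul_eq_integral_mul_of_condExp_ae_eq {Ω : Type*} {m m0 : MeasurableSpace Ω}
    {μ : Measure Ω} (hm : m ≤ m0) [SigmaFinite (μ.trim hm)] {h G q : Ω → ℝ}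
    (hh : StronglyMeasurable[m] h) (hhG : Integrable (h * G) μ) (hG : Integrable G μ)
    (hq : μ[G | m] =ᵐ[μ] q) :
    ∫ ω, h ω * G ω ∂μ = ∫ ω, h ω * q ω ∂μ :=
  calc ∫ ω, (h * G) ω ∂μ = ∫ ω, μ[h * G | m] ω ∂μ := (integral_condExp hm).symm
    _ = ∫ ω, h ω * q ω ∂μ := by
      refine integral_congr_ae ?_
      filter_upwards [condExp_mul_of_stronglyMeasurable_left hh hhG hG, hq] with ω hω hqω
      rw [hω, Pi.mul_apply, hqω]

lemma Real.exp_sum_Ico_mul_log_eq_prod_rpow (φ q : ℕ → ℝ) (hq : ∀ j, 0 < q j) (k n : ℕ) :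
    Real.exp (∑ i ∈ Finset.Ico k (n + k), φ i * Real.log (q (i - k))) =
      ∏ j ∈ Finset.range n, q j ^ φ (k + j) := by
  rw [Finset.sum_Ico_eq_sum_range, Nat.add_sub_cancel, Real.exp_sum]
  refine Finset.prod_congr rfl fun j _ => ?_
  rw [Nat.add_sub_cancel_left, Real.rpow_def_of_pos (hq j), mul_comm]

section RatioProduct

variable {Ω : Type*} {m0 : MeasurableSpace Ω} {g p : ℕ → Ω → ℝ} {a : ℕ → ℝ} {d : ℝ}

noncomputable def ratioProd (g p : ℕ → Ω → ℝ) (a : ℕ → ℝ) (m : ℕ) (ω : Ω) : ℝ :=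
  ∏ j ∈ Finset.range m, (g j ω / p j ω) ^ a j

/-- The extra factor `g m ^ a m` pays in advance for the drop of the exponent of `g (m + 1)`
from `a m` to `a (m + 1)` at the next step. -/
noncomputable def ratioSupermartingale (g p : ℕ → Ω → ℝ) (a : ℕ → ℝ) (m : ℕ) (ω : Ω) : ℝ :=
  ratioProd g p a m ω * g m ω ^ a m

lemma ratioProd_succ (m : ℕ) (ω : Ω) :
    ratioProd g p a (m + 1) ω = ratioProd g p a m ω * (g m ω / p m ω) ^ a m :=
  Finset.prod_range_succ _ m

structure DiscountedRatioBounds (g p : ℕ → Ω → ℝ) (a : ℕ → ℝ) (d : ℝ) : Prop where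
  one_le_g : ∀ j ω, 1 ≤ g j ω
  g_le : ∀ j ω, g j ω ≤ d
  one_le_p : ∀ j ω, 1 ≤ p j ω
  exponent_nonneg : ∀ j, 0 ≤ a j
  exponent_le_one : ∀ j, a j ≤ 1
  exponent_antitone : Antitone a

namespace DiscountedRatioBounds

lemma g_pos (h : DiscountedRatioBounds g p a d) (j : ℕ) (ω : Ω) : 0 < g j ω :=
  zero_lt_one.trans_le (h.one_le_g j ω)

lemma p_pos (h : DiscountedRatioBounds g p a d) (j : ℕ) (ω : Ω) : 0 < p j ω :=
  zero_lt_one.trans_le (h.one_le_p j ω)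

lemma one_le_d (h : DiscountedRatioBounds g p a d) (ω : Ω) : 1 ≤ d :=
  (h.one_le_g 0 ω).trans (h.g_le 0 ω)

lemma rpow_ratio_nonneg (h : DiscountedRatioBounds g p a d) (j : ℕ) (ω : Ω) :
    0 ≤ (g j ω / p j ω) ^ a j :=
  Real.rpow_nonneg (div_pos (h.g_pos j ω) (h.p_pos j ω)).le _

lemma rpow_ratio_le (h : DiscountedRatioBounds g p a d) (j : ℕ) (ω : Ω) :
    (g j ω / p j ω) ^ a j ≤ d :=
  Real.rpow_le_of_le_of_one_le (div_pos (h.g_pos j ω) (h.p_pos j ω)).le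
    ((div_le_self (h.g_pos j ω).le (h.one_le_p j ω)).trans (h.g_le j ω)) (h.one_le_d ω)
    (h.exponent_nonneg j) (h.exponent_le_one j)

lemma ratioProd_nonneg (h : DiscountedRatioBounds g p a d) (m : ℕ) (ω : Ω) :
    0 ≤ ratioProd g p a m ω :=
  Finset.prod_nonneg fun j _ => h.rpow_ratio_nonneg j ω

lemma ratioProd_le_pow (h : DiscountedRatioBounds g p a d) (m : ℕ) (ω : Ω) :
    ratioProd g p a m ω ≤ d ^ m :=
  (Finset.prod_le_prod (fun j _ => h.rpow_ratio_nonneg j ω) fun j _ => h.rpow_ratio_le j ω).trans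
    (by simp)

lemma ratioSupermartingale_nonneg (h : DiscountedRatioBounds g p a d) (m : ℕ) (ω : Ω) :
    0 ≤ ratioSupermartingale g p a m ω :=
  mul_nonneg (h.ratioProd_nonneg m ω) (Real.rpow_nonneg (h.g_pos m ω).le _)

lemma ratioSupermartingale_le_pow (h : DiscountedRatioBounds g p a d) (m : ℕ) (ω : Ω) :
    ratioSupermartingale g p a m ω ≤ d ^ (m + 1) :=
  pow_succ d m ▸ mul_le_mul (h.ratioProd_le_pow m ω)
    (Real.rpow_le_of_le_of_one_le (h.g_pos m ω).le (h.g_le m ω) (h.one_le_d ω)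
      (h.exponent_nonneg m) (h.exponent_le_one m))
    (Real.rpow_nonneg (h.g_pos m ω).le _) (pow_nonneg (zero_le_one.trans (h.one_le_d ω)) m)

lemma ratioProd_le_ratioSupermartingale (h : DiscountedRatioBounds g p a d) (m : ℕ) (ω : Ω) :
    ratioProd g p a m ω ≤ ratioSupermartingale g p a m ω :=
  le_mul_of_one_le_right (h.ratioProd_nonneg m ω)
    (Real.one_le_rpow (h.one_le_g m ω) (h.exponent_nonneg m))

lemma ratioSupermartingale_succ_le (h : DiscountedRatioBounds g p a d) (m : ℕ) (ω : Ω) :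
    ratioSupermartingale g p a (m + 1) ω ≤ (1 - a m) * ratioSupermartingale g p a m ω +
      a m * (ratioSupermartingale g p a m ω / p m ω * g (m + 1) ω) := by
  set Q := ratioSupermartingale g p a m ω
  have hp := h.p_pos m ω
  have hg := h.g_pos m ω
  have hg' := h.g_pos (m + 1) ω
  calc ratioSupermartingale g p a (m + 1) ω
      ≤ ratioProd g p a (m + 1) ω * g (m + 1) ω ^ a m :=
        mul_le_mul_of_nonneg_left (Real.rpow_le_rpow_of_exponent_le (h.one_le_g (m + 1) ω)
          (h.exponent_antitone m.le_succ)) (h.ratioProd_nonneg (m + 1) ω)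
    _ = Q * (g (m + 1) ω / p m ω) ^ a m := by
        simp only [Q, ratioSupermartingale, ratioProd_succ, Real.div_rpow hg.le hp.le,
          Real.div_rpow hg'.le hp.le]
        ring
    _ ≤ Q * (1 + a m * (g (m + 1) ω / p m ω - 1)) :=
        mul_le_mul_of_nonneg_left (Real.rpow_le_one_add_mul_sub_one (div_pos hg' hp).le
          (h.exponent_nonneg m) (h.exponent_le_one m)) (h.ratioSupermartingale_nonneg m ω)
    _ = (1 - a m) * Q + a m * (Q / p m ω * g (m + 1) ω) := by
        field_simp
        ring

end DiscountedRatioBounds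

section Expectation

variable {μ : Measure Ω} {ℱ : Filtration ℕ m0}

lemma adapted_ratioProd (hg : Adapted ℱ g) (hp : Adapted ℱ p) :
    Adapted ℱ (ratioProd g p a) := fun m =>
  Finset.measurable_prod _ fun j hj =>
    have hjm : ℱ j ≤ ℱ m := ℱ.mono (Finset.mem_range.mp hj).le
    (((hg j).mono hjm le_rfl).div ((hp j).mono hjm le_rfl)).pow_const _

lemma adapted_ratioSupermartingale (hg : Adapted ℱ g) (hp : Adapted ℱ p) :
    Adapted ℱ (ratioSupermartingale g p a) := fun m =>
  (adapted_ratioProd hg hp m).mul ((hg m).pow_const _)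

namespace DiscountedRatioBounds

lemma integrable_g [IsFiniteMeasure μ] (h : DiscountedRatioBounds g p a d) (hg : Adapted ℱ g)
    (j : ℕ) : Integrable (g j) μ :=
  .of_bound ((hg j).mono (ℱ.le j) le_rfl).aestronglyMeasurable d <| ae_of_all _ fun ω => by
    rw [Real.norm_of_nonneg (h.g_pos j ω).le]
    exact h.g_le j ω

lemma integrable_ratioSupermartingale [IsFiniteMeasure μ] (h : DiscountedRatioBounds g p a d)
    (hg : Adapted ℱ g) (hp : Adapted ℱ p) (m : ℕ) :
    Integrable (ratioSupermartingale g p a m) μ :=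
  .of_bound ((adapted_ratioSupermartingale hg hp m).mono (ℱ.le m) le_rfl).aestronglyMeasurable
    (d ^ (m + 1)) <| ae_of_all _ fun ω => by
      rw [Real.norm_of_nonneg (h.ratioSupermartingale_nonneg m ω)]
      exact h.ratioSupermartingale_le_pow m ω

lemma integral_ratioSupermartingale_succ_le [IsFiniteMeasure μ]
    (h : DiscountedRatioBounds g p a d) (hg : Adapted ℱ g) (hp : Adapted ℱ p)
    (hcond : ∀ j, μ[g (j + 1) | ℱ j] =ᵐ[μ] p j) (m : ℕ) :
    ∫ ω, ratioSupermartingale g p a (m + 1) ω ∂μ ≤ ∫ ω, ratioSupermartingale g p a m ω ∂μ := by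
  set Q := ratioSupermartingale g p a
  have hQp : StronglyMeasurable[ℱ m] fun ω => Q m ω / p m ω :=
    ((adapted_ratioSupermartingale hg hp m).div (hp m)).stronglyMeasurable
  have hQp_le : ∀ ω, ‖Q m ω / p m ω‖ ≤ d ^ (m + 1) := fun ω => by
    rw [Real.norm_of_nonneg (div_nonneg (h.ratioSupermartingale_nonneg m ω) (h.p_pos m ω).le)]
    exact (div_le_self (h.ratioSupermartingale_nonneg m ω) (h.one_le_p m ω)).trans
      (h.ratioSupermartingale_le_pow m ω)
  have hint : Integrable (fun ω => Q m ω / p m ω * g (m + 1) ω) μ :=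
    (h.integrable_g hg (m + 1)).bdd_mul (hQp.mono (ℱ.le m)).aestronglyMeasurable
      (ae_of_all _ hQp_le)
  have hpull : ∫ ω, Q m ω / p m ω * g (m + 1) ω ∂μ = ∫ ω, Q m ω ∂μ := by
    rw [integral_mul_eq_integral_mul_of_condExp_ae_eq (ℱ.le m) hQp hint
      (h.integrable_g hg (m + 1)) (hcond m)]
    exact integral_congr_ae (ae_of_all _ fun ω => div_mul_cancel₀ _ (h.p_pos m ω).ne')
  have hQ := h.integrable_ratioSupermartingale hg hp m (μ := μ)
  calc ∫ ω, Q (m + 1) ω ∂μ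
      ≤ ∫ ω, (1 - a m) * Q m ω + a m * (Q m ω / p m ω * g (m + 1) ω) ∂μ :=
        integral_mono (h.integrable_ratioSupermartingale hg hp (m + 1))
          ((hQ.const_mul _).add (hint.const_mul _)) (h.ratioSupermartingale_succ_le m)
    _ = ∫ ω, Q m ω ∂μ := by
        rw [integral_add (hQ.const_mul _) (hint.const_mul _), integral_const_mul,
          integral_const_mul, hpull]
        ring

lemma integral_ratioSupermartingale_le [IsProbabilityMeasure μ]
    (h : DiscountedRatioBounds g p a d) (hg : Adapted ℱ g) (hp : Adapted ℱ p)
    (hcond : ∀ j, μ[g (j + 1) | ℱ j] =ᵐ[μ] p j) (m : ℕ) :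
    ∫ ω, ratioSupermartingale g p a m ω ∂μ ≤ d := by
  induction m with
  | zero =>
    calc ∫ ω, ratioSupermartingale g p a 0 ω ∂μ ≤ ∫ _, d ∂μ :=
          integral_mono (h.integrable_ratioSupermartingale hg hp 0) (integrable_const d)
            fun ω => (h.ratioSupermartingale_le_pow 0 ω).trans_eq (pow_one d)
      _ = d := by simp
  | succ m ih => exact (h.integral_ratioSupermartingale_succ_le hg hp hcond m).trans ih

theorem integral_ratioProd_le [IsProbabilityMeasure μ] (h : DiscountedRatioBounds g p a d)
    (hg : Adapted ℱ g) (hp : Adapted ℱ p) (hcond : ∀ j, μ[g (j + 1) | ℱ j] =ᵐ[μ] p j)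
    (n : ℕ) : ∫ ω, ratioProd g p a n ω ∂μ ≤ d :=
  (integral_mono_of_nonneg (ae_of_all _ (h.ratioProd_nonneg n))
    (h.integrable_ratioSupermartingale hg hp n)
    (ae_of_all _ (h.ratioProd_le_ratioSupermartingale n))).trans
    (h.integral_ratioSupermartingale_le hg hp hcond n)

end DiscountedRatioBounds

end Expectation

lemma discountedRatioBounds_of_kernel {E : Type*} [MeasurableSpace E] (P : Kernel E E)
    [IsMarkovKernel P] (X : ℕ → Ω → E) {f : E → ℝ} (hf : Measurable f) {c : ℝ} (hc : 0 < c)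
    (hcf : ∀ y, c ≤ f y) (hfd : ∀ y, f y ≤ d * c) (ha0 : ∀ j, 0 ≤ a j) (ha1 : ∀ j, a j ≤ 1)
    (ha : Antitone a) :
    DiscountedRatioBounds (fun j => c⁻¹ • fun ω => f (X j ω))
      (fun j => c⁻¹ • fun ω => ∫ y, f y ∂P (X j ω)) a d := by
  have hfP : ∀ z, Integrable f (P z) := fun z =>
    .of_bound hf.aestronglyMeasurable (d * c) <| ae_of_all _ fun y => by
      rw [Real.norm_of_nonneg (hc.le.trans (hcf y))]
      exact hfd y
  have hcP : ∀ z, c ≤ ∫ y, f y ∂P z := fun z => by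
    simpa using integral_mono (integrable_const c) (hfP z) hcf
  exact
    { one_le_g := fun j ω => (one_le_inv_mul₀ hc).2 (hcf _)
      g_le := fun j ω => (inv_mul_le_iff₀ hc).2 ((hfd _).trans_eq (mul_comm d c))
      one_le_p := fun j ω => (one_le_inv_mul₀ hc).2 (hcP _)
      exponent_nonneg := ha0
      exponent_le_one := ha1
      exponent_antitone := ha }

end RatioProduct

theorem discounted_exponential_estimate_general
    {Ω E : Type*} {m0 : MeasurableSpace Ω}
    [TopologicalSpace E] [MeasurableSpace E] [BorelSpace E]
    (μ : Measure Ω) [IsProbabilityMeasure μ]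
    (ℱ : Filtration ℕ m0)
    (P : Kernel E E) [IsMarkovKernel P]
    (X : ℕ → Ω → E) (hX : ∀ i, Measurable[ℱ i] (X i))
    (f : E → ℝ) (hfc : Continuous f) (hf1 : ∀ y, 1 ≤ f y)
    (d : ℝ) (hfd : ∀ y z, f y ≤ d * f z)
    (hMarkovf : ∀ i, μ[(fun ω => f (X (i + 1) ω)) | ℱ i]
        =ᵐ[μ] fun ω => ∫ y, f y ∂(P (X i ω)))
    (φ : ℕ → ℝ)
    (hφpos : ∀ i, 0 < φ i) (hφle : ∀ i, φ i ≤ 1)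
    (hφmono : ∀ i j, i ≤ j → φ j ≤ φ i)
    (k n : ℕ) :
    ∫ ω, Real.exp (∑ i ∈ Finset.Ico k (n + k),
        φ i * Real.log (f (X (i - k) ω) / ∫ y, f y ∂(P (X (i - k) ω)))) ∂μ
      ≤ d := by
  have : Nonempty E := ⟨X 0 (nonempty_of_isProbabilityMeasure μ).some⟩
  set c := ⨅ y, f y
  have hc : 0 < c := one_pos.trans_le (le_ciInf hf1)
  have hbounds := discountedRatioBounds_of_kernel P X hfc.measurable hc
    (ciInf_le ⟨1, Set.forall_mem_range.2 hf1⟩)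
    (le_mul_iInf_of_forall_le_mul (fun y => one_pos.trans_le (hf1 y)) hfd)
    (fun j => (hφpos (k + j)).le) (fun j => hφle (k + j)) fun i j hij => hφmono _ _ (by omega)
  set g : ℕ → Ω → ℝ := fun j => c⁻¹ • fun ω => f (X j ω)
  set p : ℕ → Ω → ℝ := fun j => c⁻¹ • fun ω => ∫ y, f y ∂P (X j ω)
  have hg : Adapted ℱ g := fun j => (hfc.measurable.comp (hX j)).const_smul _
  have hp : Adapted ℱ p := fun j =>
    ((hfc.measurable.stronglyMeasurable.integral_kernel (κ := P)).measurable.comp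
      (hX j)).const_smul _
  have hcond : ∀ j, μ[g (j + 1) | ℱ j] =ᵐ[μ] p j := fun j =>
    (condExp_smul _ _ _).trans ((hMarkovf j).const_smul _)
  have hratio : ∀ j ω, f (X j ω) / ∫ y, f y ∂P (X j ω) = g j ω / p j ω := fun j ω =>
    (mul_div_mul_left _ _ (inv_ne_zero hc.ne')).symm
  refine (integral_congr_ae (ae_of_all _ fun ω => ?_)).trans_le
    (hbounds.integral_ratioProd_le hg hp hcond n)
  simp_rw [hratio]
  exact Real.exp_sum_Ico_mul_log_eq_prod_rpow φ _
    (fun j => div_pos (hbounds.g_pos j ω) (hbounds.p_pos j ω)) k n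

/-- Key exponential estimate for discounted empirical measures: for a Markov chain
`X` started at `x` with Markov kernel `P`, `φ : ℕ → (0,1]` nonincreasing with
`φ(0) = 1`, and `f` continuous bounded with `1 ≤ f` and `sup f ≤ d · inf f`,
`E_{k,x}[exp(Σ_{i=k}^{n+k-1} φ(i) log(f(X_{i-k})/Pf(X_{i-k})))] ≤ d`. -/
theorem discounted_exponential_estimate
    {Ω E : Type*} {m0 : MeasurableSpace Ω}
    [TopologicalSpace E] [MeasurableSpace E] [BorelSpace E]
    (μ : Measure Ω) [IsProbabilityMeasure μ]
    (ℱ : Filtration ℕ m0)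
    (P : Kernel E E) [IsMarkovKernel P]
    (X : ℕ → Ω → E) (hX : ∀ i, Measurable[ℱ i] (X i))
    (x : E) (hstart : ∀ᵐ ω ∂μ, X 0 ω = x)
    (f : E → ℝ) (hfc : Continuous f) (hf1 : ∀ y, 1 ≤ f y)
    (d : ℝ) (hfd : ∀ y z, f y ≤ d * f z)
    (hMarkovf : ∀ i, μ[(fun ω => f (X (i + 1) ω)) | ℱ i]
        =ᵐ[μ] fun ω => ∫ y, f y ∂(P (X i ω)))
    (φ : ℕ → ℝ) (hφ0 : φ 0 = 1)
    (hφpos : ∀ i, 0 < φ i) (hφle : ∀ i, φ i ≤ 1)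
    (hφmono : ∀ i j, i ≤ j → φ j ≤ φ i)
    (k n : ℕ) :
    ∫ ω, Real.exp (∑ i ∈ Finset.Ico k (n + k),
        φ i * Real.log (f (X (i - k) ω) / ∫ y, f y ∂(P (X (i - k) ω)))) ∂μ
      ≤ d :=
  discounted_exponential_estimate_general μ ℱ P X hX f hfc hf1 d hfd hMarkovf φ hφpos hφle hφmono k
    n
end

section
/- Under the setting of the discounted empirical measure: let S_k^n = (Σ_{i=k}^{n+k-1} φ(i))^{-1} Σ_{i=k}^{n+k-1} φ(i) δ_{X_{i-k}} and Q_{k,x}^n(D) = P_{k,x}(S_k^n ∈ D). If f ∈ F_d (continuous, 1 ≤ f, sup f ≤ d inf f) and B ⊂ P(E) is measurable, then Q_{k,x}^n(B) ≤ d · exp(−Σ_{i=k}^{n+k-1} φ(i) · inf_{ζ∈B} ∫ log(f/Pf) dζ). -/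
open MeasureTheory ProbabilityTheory

/-- The discounted empirical measure
`S_k^n = (Σ_{i=k}^{n+k-1} φ(i))^{-1} Σ_{i=k}^{n+k-1} φ(i) δ_{X_{i-k}}`. -/
noncomputable def discountedEmpirical {Ω E : Type*} [MeasurableSpace E]
    (φ : ℕ → ℝ) (k n : ℕ) (X : ℕ → Ω → E) (ω : Ω) : Measure E :=
  (∑ i ∈ Finset.Ico k (n + k), ENNReal.ofReal (φ i))⁻¹ •
    ∑ i ∈ Finset.Ico k (n + k),
      ENNReal.ofReal (φ i) • Measure.dirac (X (i - k) ω)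

/-! With `Pf y = ∫ z, f z ∂(P y)`, split
`log (f / Pf) (X j) = (log f (X j) - log f (X (j + 1))) + log (f (X (j + 1)) / Pf (X j))`.
Since `φ` is nonincreasing with values in `(0, 1]` and `log f` oscillates by at most `log d`,
Abel summation bounds the discounted sum of the first brackets by `log d`. The product of the
factors `(f (X (j + 1)) / Pf (X j)) ^ φ (k + j)` has expectation at most `1`: by Bernoulli's
inequality `a ^ t ≤ 1 - t + t * a` and `E[f (X (j + 1)) | ℱ j] = Pf (X j)`, each factor has
conditional mean at most `1`. Markov's inequality for `exp` of the discounted sum then gives the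
bound. -/

open Finset Real

theorem sum_mul_sub_succ_le {a g : ℕ → ℝ} {c : ℝ} (hc : 0 ≤ c) (ha0 : a 0 ≤ 1)
    (ha : ∀ j, 0 ≤ a j) (hanti : Antitone a) (hg : ∀ j, g 0 ≤ c + g j) (n : ℕ) :
    ∑ j ∈ range n, a j * (g j - g (j + 1)) ≤ c := by
  -- Abel summation, with the boundary term `a n * (c + g n - g 0) ≥ 0` kept in the induction
  have key : ∀ m, ∑ j ∈ range m, a j * (g j - g (j + 1)) ≤ a 0 * c - a m * (c + g m - g 0) := by
    intro m
    induction m with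
    | zero => simp
    | succ m ih =>
      rw [sum_range_succ]
      have := mul_le_mul_of_nonneg_right (hanti m.le_succ) (sub_nonneg.2 (hg (m + 1)))
      nlinarith
  nlinarith [key n, mul_nonneg (ha n) (sub_nonneg.2 (hg n)), ha 0]

theorem exp_sum_mul_log_div_le {a F G : ℕ → ℝ} {d : ℝ} (ha0 : a 0 ≤ 1) (ha : ∀ j, 0 ≤ a j)
    (hanti : Antitone a) (hF : ∀ j, 0 < F j) (hG : ∀ j, 0 < G j) (hFd : ∀ j, F 0 ≤ d * F j)
    (n : ℕ) :
    exp (∑ j ∈ range n, a j * log (F j / G j)) ≤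
      d * ∏ j ∈ range n, (F (j + 1) / G j) ^ a j := by
  have hd : 0 < d := pos_of_mul_pos_left ((hF 0).trans_le (hFd 0)) (hF 0).le
  have htel : ∑ j ∈ range n, a j * (log (F j) - log (F (j + 1))) ≤ log d := by
    refine sum_mul_sub_succ_le (log_nonneg ?_) ha0 ha hanti (fun j => ?_) n
    · have := hFd 0
      nlinarith [hF 0]
    · rw [← log_mul hd.ne' (hF j).ne']
      exact log_le_log (hF 0) (hFd j)
  have hsplit : ∀ j, log (F j / G j) =
      (log (F j) - log (F (j + 1))) + log (F (j + 1) / G j) := fun j => by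
    rw [log_div (hF j).ne' (hG j).ne', log_div (hF (j + 1)).ne' (hG j).ne']
    ring
  calc exp (∑ j ∈ range n, a j * log (F j / G j))
      = exp (∑ j ∈ range n, a j * (log (F j) - log (F (j + 1)))) *
          ∏ j ∈ range n, exp (log (F (j + 1) / G j) * a j) := by
        simp_rw [hsplit, mul_add, sum_add_distrib, exp_add, exp_sum, mul_comm (a _)]
    _ ≤ d * ∏ j ∈ range n, (F (j + 1) / G j) ^ a j := by
        rw [← exp_log hd]
        refine (mul_le_mul_of_nonneg_right (exp_le_exp.2 htel)
          (prod_nonneg fun j _ => ?_)).trans_eq ?_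
        · positivity
        · congr 1
          exact prod_congr rfl fun j _ => (rpow_def_of_pos (div_pos (hF _) (hG _)) _).symm

theorem rpow_le_one_sub_add_mul {a t : ℝ} (ha : 0 ≤ a) (ht0 : 0 ≤ t) (ht1 : t ≤ 1) :
    a ^ t ≤ 1 - t + t * a := by
  have := rpow_one_add_le_one_add_mul_self (s := a - 1) (by linarith) ht0 ht1
  rw [add_sub_cancel] at this
  linarith

section Conditional

variable {Ω : Type*} {m m0 : MeasurableSpace Ω} {μ : Measure Ω}

theorem integral_mul_eq_of_condExp_eq [IsFiniteMeasure μ] (hm : m ≤ m0) {Y U V : Ω → ℝ}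
    (hY : StronglyMeasurable[m] Y) (hYU : Integrable (Y * U) μ) (hU : Integrable U μ)
    (hUV : μ[U | m] =ᵐ[μ] V) : ∫ ω, Y ω * U ω ∂μ = ∫ ω, Y ω * V ω ∂μ := by
  change ∫ ω, (Y * U) ω ∂μ = _
  rw [← integral_condExp hm]
  refine integral_congr_ae ?_
  filter_upwards [condExp_mul_of_stronglyMeasurable_left hY hYU hU, hUV] with ω h1 h2
  rw [h1, Pi.mul_apply, h2]

variable {Y U V : Ω → ℝ} {C t : ℝ}

theorem integrable_mul_rpow_div (hY : Integrable Y μ) (hU : Measurable U) (hV : Measurable V)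
    (hU0 : ∀ ω, 0 ≤ U ω) (hUC : ∀ ω, U ω ≤ C) (hV1 : ∀ ω, 1 ≤ V ω) (ht0 : 0 ≤ t) (ht1 : t ≤ 1) :
    Integrable (fun ω => Y ω * (U ω / V ω) ^ t) μ := by
  refine (hY.norm.mul_const (1 + C)).mono' ?_ (ae_of_all _ fun ω => ?_)
  · exact hY.aestronglyMeasurable.mul ((hU.div hV).pow_const t).aestronglyMeasurable
  · have hV0 : 0 < V ω := one_pos.trans_le (hV1 ω)
    have hUV0 : 0 ≤ U ω / V ω := div_nonneg (hU0 ω) hV0.le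
    have hUVC : U ω / V ω ≤ C := (div_le_self (hU0 ω) (hV1 ω)).trans (hUC ω)
    rw [norm_mul, Real.norm_of_nonneg (rpow_nonneg hUV0 t)]
    refine mul_le_mul_of_nonneg_left ?_ (norm_nonneg _)
    nlinarith [rpow_le_one_sub_add_mul hUV0 ht0 ht1]

theorem integral_mul_rpow_div_le [IsFiniteMeasure μ] (hm : m ≤ m0) (hYm : Measurable[m] Y)
    (hY : Integrable Y μ) (hY0 : ∀ ω, 0 ≤ Y ω) (hU : Measurable U) (hVm : Measurable[m] V)
    (hU0 : ∀ ω, 0 ≤ U ω) (hUC : ∀ ω, U ω ≤ C) (hV1 : ∀ ω, 1 ≤ V ω) (hUV : μ[U | m] =ᵐ[μ] V)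
    (ht0 : 0 ≤ t) (ht1 : t ≤ 1) :
    ∫ ω, Y ω * (U ω / V ω) ^ t ∂μ ≤ ∫ ω, Y ω ∂μ := by
  have hV0 : ∀ ω, 0 < V ω := fun ω => one_pos.trans_le (hV1 ω)
  set W : Ω → ℝ := fun ω => t * (Y ω / V ω)
  have hWm : Measurable[m] W := measurable_const.mul (hYm.div hVm)
  have hWU : Integrable (fun ω => W ω * U ω) μ := by
    refine (hY.norm.mul_const C).mono' ((hWm.mono hm le_rfl).mul hU).aestronglyMeasurable
      (ae_of_all _ fun ω => ?_)
    have hYV : Y ω / V ω ≤ Y ω := div_le_self (hY0 ω) (hV1 ω)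
    have hYV0 : 0 ≤ Y ω / V ω := div_nonneg (hY0 ω) (hV0 ω).le
    rw [Real.norm_of_nonneg (mul_nonneg (mul_nonneg ht0 hYV0) (hU0 ω)),
      Real.norm_of_nonneg (hY0 ω)]
    exact mul_le_mul (by nlinarith) (hUC ω) (hU0 ω) (hY0 ω)
  have hUint : Integrable U μ :=
    Integrable.of_bound hU.aestronglyMeasurable C
      (ae_of_all _ fun ω => by rw [Real.norm_of_nonneg (hU0 ω)]; exact hUC ω)
  have hpull := integral_mul_eq_of_condExp_eq hm hWm.stronglyMeasurable hWU hUint hUV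
  calc ∫ ω, Y ω * (U ω / V ω) ^ t ∂μ
      ≤ ∫ ω, ((1 - t) * Y ω + W ω * U ω) ∂μ := by
        refine integral_mono
          (integrable_mul_rpow_div hY hU (hVm.mono hm le_rfl) hU0 hUC hV1 ht0 ht1)
          ((hY.const_mul _).add hWU) fun ω => ?_
        have := mul_le_mul_of_nonneg_left
          (rpow_le_one_sub_add_mul (div_nonneg (hU0 ω) (hV0 ω).le) ht0 ht1) (hY0 ω)
        simp only [W]
        refine this.trans_eq ?_
        ring
    _ = (1 - t) * ∫ ω, Y ω ∂μ + ∫ ω, W ω * V ω ∂μ := by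
        rw [integral_add (hY.const_mul _) hWU, integral_const_mul, ← hpull]
    _ = ∫ ω, Y ω ∂μ := by
        have : ∀ ω, W ω * V ω = t * Y ω := fun ω => by
          simp only [W]; field_simp [(hV0 ω).ne']
        simp_rw [this, integral_const_mul]; ring

end Conditional

section Filtration

variable {Ω : Type*} {m0 : MeasurableSpace Ω} {μ : Measure Ω} {ℱ : Filtration ℕ m0}
  {U V : ℕ → Ω → ℝ} {t : ℕ → ℝ} {C : ℝ}

theorem measurable_prod_rpow_div (hU : ∀ j, Measurable[ℱ (j + 1)] (U j))
    (hV : ∀ j, Measurable[ℱ j] (V j)) (n : ℕ) :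
    Measurable[ℱ n] fun ω => ∏ j ∈ range n, (U j ω / V j ω) ^ t j :=
  Finset.measurable_prod _ fun j hj =>
    have hjn : j + 1 ≤ n := mem_range.1 hj
    (((hU j).mono (ℱ.mono hjn) le_rfl).div ((hV j).mono (ℱ.mono (by omega)) le_rfl)).pow_const _

theorem integrable_prod_rpow_div [IsFiniteMeasure μ] (hU : ∀ j, Measurable (U j))
    (hV : ∀ j, Measurable (V j)) (hU0 : ∀ j ω, 0 ≤ U j ω) (hUC : ∀ j ω, U j ω ≤ C)
    (hV1 : ∀ j ω, 1 ≤ V j ω) (ht0 : ∀ j, 0 ≤ t j) (ht1 : ∀ j, t j ≤ 1) (n : ℕ) :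
    Integrable (fun ω => ∏ j ∈ range n, (U j ω / V j ω) ^ t j) μ := by
  induction n with
  | zero => simp
  | succ n ih =>
    simp_rw [prod_range_succ]
    exact integrable_mul_rpow_div ih (hU n) (hV n) (hU0 n) (hUC n) (hV1 n) (ht0 n) (ht1 n)

theorem integral_prod_rpow_div_le_one [IsProbabilityMeasure μ]
    (hU : ∀ j, Measurable[ℱ (j + 1)] (U j)) (hV : ∀ j, Measurable[ℱ j] (V j))
    (hU0 : ∀ j ω, 0 ≤ U j ω) (hUC : ∀ j ω, U j ω ≤ C) (hV1 : ∀ j ω, 1 ≤ V j ω)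
    (hUV : ∀ j, μ[U j | ℱ j] =ᵐ[μ] V j) (ht0 : ∀ j, 0 ≤ t j) (ht1 : ∀ j, t j ≤ 1) (n : ℕ) :
    ∫ ω, ∏ j ∈ range n, (U j ω / V j ω) ^ t j ∂μ ≤ 1 := by
  induction n with
  | zero => simp
  | succ n ih =>
    simp_rw [prod_range_succ]
    refine (integral_mul_rpow_div_le (ℱ.le n) (measurable_prod_rpow_div hU hV n)
      (integrable_prod_rpow_div (fun j => (hU j).mono (ℱ.le _) le_rfl)
        (fun j => (hV j).mono (ℱ.le _) le_rfl) hU0 hUC hV1 ht0 ht1 n)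
      (fun ω => prod_nonneg fun j _ =>
        rpow_nonneg (div_nonneg (hU0 j ω) (zero_le_one.trans (hV1 j ω))) _)
      ((hU n).mono (ℱ.le _) le_rfl) (hV n) (hU0 n) (hUC n) (hV1 n) (hUV n) (ht0 n) (ht1 n)).trans ih

end Filtration

theorem one_le_integral_of_one_le_of_le {α : Type*} {_ : MeasurableSpace α} {ν : Measure α}
    [IsProbabilityMeasure ν] {f : α → ℝ} {C : ℝ} (hf : Measurable f) (hf1 : ∀ y, 1 ≤ f y)
    (hfC : ∀ y, f y ≤ C) : 1 ≤ ∫ y, f y ∂ν := by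
  have hfint : Integrable f ν := Integrable.of_bound hf.aestronglyMeasurable C
    (ae_of_all _ fun y => by rw [Real.norm_of_nonneg (zero_le_one.trans (hf1 y))]; exact hfC y)
  simpa using integral_mono (integrable_const 1) hfint hf1

theorem sum_mul_integral_discountedEmpirical {Ω E : Type*} [MeasurableSpace E] {φ : ℕ → ℝ}
    (hφ : ∀ i, 0 ≤ φ i) (k n : ℕ) (X : ℕ → Ω → E) (ω : Ω) {g : E → ℝ}
    (hg : StronglyMeasurable g) :
    (∑ i ∈ Ico k (n + k), φ i) * ∫ y, g y ∂(discountedEmpirical φ k n X ω) =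
      ∑ i ∈ Ico k (n + k), φ i * g (X (i - k) ω) := by
  rcases (sum_nonneg fun i _ => hφ i : 0 ≤ ∑ i ∈ Ico k (n + k), φ i).eq_or_lt with hc | hc
  · have hφ0 : ∀ i ∈ Ico k (n + k), φ i = 0 :=
      (sum_eq_zero_iff_of_nonneg fun i _ => hφ i).1 hc.symm
    rw [← hc, zero_mul, sum_eq_zero fun i hi => by rw [hφ0 i hi, zero_mul]]
  have hcE : (∑ i ∈ Ico k (n + k), ENNReal.ofReal (φ i))⁻¹.toReal =
      (∑ i ∈ Ico k (n + k), φ i)⁻¹ := by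
    rw [ENNReal.toReal_inv, ENNReal.toReal_sum fun i _ => ENNReal.ofReal_ne_top]
    simp_rw [ENNReal.toReal_ofReal (hφ _)]
  have hint : ∀ i ∈ Ico k (n + k),
      Integrable g (ENNReal.ofReal (φ i) • Measure.dirac (X (i - k) ω)) := fun i _ =>
    (integrable_dirac' hg enorm_lt_top).smul_measure ENNReal.ofReal_ne_top
  rw [discountedEmpirical, integral_smul_measure, integral_finsetSum_measure hint, hcE,
    smul_eq_mul, ← mul_assoc, mul_inv_cancel₀ hc.ne', one_mul]
  refine sum_congr rfl fun i _ => ?_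
  rw [integral_smul_measure, integral_dirac' _ _ hg, ENNReal.toReal_ofReal (hφ i), smul_eq_mul]

theorem measureReal_le_mul_exp_neg_mul_sInf {Ω α : Type*} {m0 : MeasurableSpace Ω}
    {μ : Measure Ω} [IsProbabilityMeasure μ] {S : Ω → α} {B : Set α} {L : α → ℝ} {W : Ω → ℝ}
    {c d : ℝ} (hc : 0 ≤ c) (hd : 1 ≤ d) (hW0 : ∀ ω, 0 ≤ W ω) (hW : Integrable W μ)
    (hW1 : ∫ ω, W ω ∂μ ≤ 1) (hSW : ∀ ω, exp (c * L (S ω)) ≤ d * W ω) :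
    μ.real {ω | S ω ∈ B} ≤ d * exp (-c * sInf {r | ∃ ζ ∈ B, r = L ζ}) := by
  by_cases hT : BddBelow {r | ∃ ζ ∈ B, r = L ζ}
  · set s := c * sInf {r | ∃ ζ ∈ B, r = L ζ}
    have hA : {ω | S ω ∈ B} ⊆ {ω | exp s ≤ d * W ω} := fun ω hω =>
      (exp_le_exp.2 (mul_le_mul_of_nonneg_left (csInf_le hT ⟨_, hω, rfl⟩) hc)).trans (hSW ω)
    have hmarkov := mul_meas_ge_le_integral_of_nonneg
      (ae_of_all μ fun ω => mul_nonneg (zero_le_one.trans hd) (hW0 ω)) (hW.const_mul d) (exp s)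
    rw [integral_const_mul] at hmarkov
    rw [neg_mul, exp_neg, ← div_eq_mul_inv, le_div_iff₀ (exp_pos s), mul_comm]
    exact (mul_le_mul_of_nonneg_left (measureReal_mono hA) (exp_pos s).le).trans
      (hmarkov.trans (mul_le_of_le_one_right (by linarith) hW1))
  · rw [csInf_of_not_bddBelow hT, Real.sInf_empty, mul_zero, exp_zero, mul_one]
    exact measureReal_le_one.trans hd

theorem discounted_empirical_chernoff_bound_general
    {Ω E : Type*} {m0 : MeasurableSpace Ω}
    [TopologicalSpace E] [MeasurableSpace E] [BorelSpace E]
    (μ : Measure Ω) [IsProbabilityMeasure μ]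
    (ℱ : Filtration ℕ m0)
    (P : Kernel E E) [IsMarkovKernel P]
    (X : ℕ → Ω → E) (hX : ∀ i, Measurable[ℱ i] (X i))
    (x : E)
    (f : E → ℝ) (hfc : Continuous f) (hf1 : ∀ y, 1 ≤ f y)
    (d : ℝ) (hfd : ∀ y z, f y ≤ d * f z)
    (hMarkovf : ∀ i, μ[(fun ω => f (X (i + 1) ω)) | ℱ i]
        =ᵐ[μ] fun ω => ∫ y, f y ∂(P (X i ω)))
    (φ : ℕ → ℝ)
    (hφpos : ∀ i, 0 < φ i) (hφle : ∀ i, φ i ≤ 1)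
    (hφmono : ∀ i j, i ≤ j → φ j ≤ φ i)
    (k n : ℕ)
    (B : Set (Measure E)) :
    (μ {ω | discountedEmpirical φ k n X ω ∈ B}).toReal
      ≤ d * Real.exp (-(∑ i ∈ Finset.Ico k (n + k), φ i) *
          sInf {r : ℝ | ∃ ζ ∈ B,
            r = ∫ y, Real.log (f y / ∫ z, f z ∂(P y)) ∂ζ}) := by
  set Pf : E → ℝ := fun y => ∫ z, f z ∂(P y)
  have hfm : Measurable f := hfc.measurable
  have hPfm : Measurable Pf := (hfm.stronglyMeasurable.integral_kernel (κ := P)).measurable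
  have hPf1 : ∀ y, 1 ≤ Pf y := fun y => one_le_integral_of_one_le_of_le hfm hf1 (hfd · x)
  have hd : 1 ≤ d := by nlinarith [hfd x x, hf1 x]
  have hU : ∀ j, Measurable[ℱ (j + 1)] fun ω => f (X (j + 1) ω) := fun j => hfm.comp (hX _)
  have hV : ∀ j, Measurable[ℱ j] fun ω => Pf (X j ω) := fun j => hPfm.comp (hX j)
  have hU0 : ∀ (j : ℕ) ω, 0 ≤ f (X (j + 1) ω) := fun j ω => zero_le_one.trans (hf1 _)
  have hUC : ∀ (j : ℕ) ω, f (X (j + 1) ω) ≤ d * f x := fun j ω => hfd _ x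
  set W : Ω → ℝ := fun ω => ∏ j ∈ range n, (f (X (j + 1) ω) / Pf (X j ω)) ^ φ (k + j)
  have hW : Integrable W μ := integrable_prod_rpow_div (fun j => (hU j).mono (ℱ.le _) le_rfl)
    (fun j => (hV j).mono (ℱ.le _) le_rfl) hU0 hUC (fun j ω => hPf1 _)
    (fun j => (hφpos _).le) (fun j => hφle _) n
  have hW1 : ∫ ω, W ω ∂μ ≤ 1 := integral_prod_rpow_div_le_one hU hV hU0 hUC (fun j ω => hPf1 _)
    hMarkovf (fun j => (hφpos _).le) (fun j => hφle _) n
  refine measureReal_le_mul_exp_neg_mul_sInf (sum_nonneg fun i _ => (hφpos i).le) hd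
    (fun ω => prod_nonneg fun j _ =>
      rpow_nonneg (div_nonneg (hU0 j ω) (zero_le_one.trans (hPf1 _))) _)
    hW hW1 fun ω => ?_
  have hsum := sum_mul_integral_discountedEmpirical (fun i => (hφpos i).le) k n X ω
    (g := fun y => log (f y / Pf y)) (hfm.div hPfm).log.stronglyMeasurable
  refine (congrArg exp hsum).trans_le ?_
  rw [sum_Ico_eq_sum_range]
  simp only [Nat.add_sub_cancel, Nat.add_sub_cancel_left]
  exact exp_sum_mul_log_div_le (hφle k) (fun j => (hφpos _).le)
    (fun i j hij => hφmono _ _ (by omega)) (fun j => one_pos.trans_le (hf1 _))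
    (fun j => one_pos.trans_le (hPf1 _)) (fun j => hfd _ _) n

/-- Chernoff-type bound for discounted empirical measures: for `f ∈ F_d`
(continuous, `1 ≤ f`, `sup f ≤ d inf f`) and a set `B` of measures whose
preimage under `S_k^n` is measurable,
`Q_{k,x}^n(B) ≤ d · exp(−Σ_{i=k}^{n+k-1} φ(i) · inf_{ζ∈B} ∫ log(f/Pf) dζ)`. -/
theorem discounted_empirical_chernoff_bound
    {Ω E : Type*} {m0 : MeasurableSpace Ω}
    [TopologicalSpace E] [MeasurableSpace E] [BorelSpace E]
    (μ : Measure Ω) [IsProbabilityMeasure μ]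
    (ℱ : Filtration ℕ m0)
    (P : Kernel E E) [IsMarkovKernel P]
    (hFeller : ∀ g : E → ℝ, Continuous g → (∀ y, |g y| ≤ 1) →
      Continuous fun y => ∫ z, g z ∂(P y))
    (X : ℕ → Ω → E) (hX : ∀ i, Measurable[ℱ i] (X i))
    (x : E) (hstart : ∀ᵐ ω ∂μ, X 0 ω = x)
    (f : E → ℝ) (hfc : Continuous f) (hf1 : ∀ y, 1 ≤ f y)
    (d : ℝ) (hfd : ∀ y z, f y ≤ d * f z)
    (hMarkovf : ∀ i, μ[(fun ω => f (X (i + 1) ω)) | ℱ i]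
        =ᵐ[μ] fun ω => ∫ y, f y ∂(P (X i ω)))
    (φ : ℕ → ℝ) (hφ0 : φ 0 = 1)
    (hφpos : ∀ i, 0 < φ i) (hφle : ∀ i, φ i ≤ 1)
    (hφmono : ∀ i j, i ≤ j → φ j ≤ φ i)
    (k n : ℕ)
    (B : Set (Measure E))
    (hBmeas : MeasurableSet {ω | discountedEmpirical φ k n X ω ∈ B}) :
    (μ {ω | discountedEmpirical φ k n X ω ∈ B}).toReal
      ≤ d * Real.exp (-(∑ i ∈ Finset.Ico k (n + k), φ i) *
          sInf {r : ℝ | ∃ ζ ∈ B,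
            r = ∫ y, Real.log (f y / ∫ z, f z ∂(P y)) ∂ζ}) :=
  discounted_empirical_chernoff_bound_general μ ℱ P X hX x f hfc hf1 d hfd hMarkovf φ hφpos hφle
    hφmono k n B
end

section
/- Let C be a compact subset of P(E) and suppose inf_{ζ∈C} I_d(ζ) > κ > 0, where I_d(ν) = sup_{f∈F_d} ∫ log(f/Pf) dν. Then there exist finitely many functions f₁,…,f_m ∈ F_d such that C ⊆ ⋃_{j=1}^m {ζ : ∫ log(f_j/Pf_j) dζ > κ}, and consequently Q_{k,x}^n(C) ≤ m·d·exp(−κ·Σ_{i=k}^{n+k-1} φ(i)) uniformly in x. -/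
/-!
Every `ζ ∈ C` has a witness `f ∈ F_d` with `ζ (log (f / Pf)) > κ`. Since `log (f / Pf)` is
continuous (Feller) and bounded by `log d`, these conditions define weakly open sets, and
finitely many of them cover the compact set `C`; a union bound reduces the estimate to one `f`.

For one `f`, write `a_l = φ (k + l)` and `Φ = ∑ a_l`. The event `S_k^n (log (f / Pf)) > κ` lies in
`{exp (κ Φ) ≤ ∏_l (f (X_l) / Pf (X_l)) ^ a_l}`. Shifting every numerator to `f (X_{l+1})` costs at
most a factor `d`: the leftover `∏ (f (X_l) / f (X_{l+1})) ^ a_l` is bounded by Abel summation,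
because the weights decrease and start below `1`. The shifted product has expectation at most `1`:
conditioning on `ℱ_l` turns `f (X_{l+1}) ^ a` into `P (f ^ a) (X_l) ≤ (Pf (X_l)) ^ a` by Jensen's
inequality for the concave map `t ↦ t ^ a`. Markov's inequality concludes.
-/

open MeasureTheory ProbabilityTheory

open Finset Real

theorem sum_mul_sub_succ_le_mul {a c : ℕ → ℝ} {L : ℝ} (ha : Antitone a) (ha0 : ∀ j, 0 ≤ a j)
    (hc : ∀ j l, c j - c l ≤ L) (n : ℕ) :
    ∑ j ∈ range n, a j * (c j - c (j + 1)) ≤ a 0 * L := by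
  have abel : ∀ n, ∑ j ∈ range n, a j * (c j - c (j + 1)) ≤
      a n * (c 0 - c n) + (a 0 - a n) * L := by
    intro n
    induction n with
    | zero => simp
    | succ n ih =>
      rw [sum_range_succ]
      nlinarith [ha n.le_succ, hc 0 (n + 1)]
  nlinarith [abel n, ha0 n, hc 0 n]

theorem prod_div_succ_rpow_le_rpow {a b : ℕ → ℝ} {D : ℝ} (ha : Antitone a) (ha0 : ∀ j, 0 ≤ a j)
    (hb : ∀ j, 0 < b j) (hbD : ∀ j l, b j ≤ D * b l) (n : ℕ) :
    ∏ j ∈ range n, (b j / b (j + 1)) ^ a j ≤ D ^ a 0 := by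
  have hD : 0 < D := pos_of_mul_pos_left ((hb 0).trans_le (hbD 0 0)) (hb 0).le
  have hlog : ∀ j l, log (b j) - log (b l) ≤ log D := fun j l => by
    rw [sub_le_iff_le_add, ← log_mul hD.ne' (hb l).ne']
    exact log_le_log (hb j) (hbD j l)
  calc ∏ j ∈ range n, (b j / b (j + 1)) ^ a j
      = exp (∑ j ∈ range n, a j * (log (b j) - log (b (j + 1)))) := by
        rw [exp_sum]
        refine prod_congr rfl fun j _ => ?_
        rw [rpow_def_of_pos (div_pos (hb j) (hb (j + 1))), log_div (hb j).ne' (hb _).ne', mul_comm]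
    _ ≤ exp (log D * a 0) := by
        rw [exp_le_exp, mul_comm]
        exact sum_mul_sub_succ_le_mul ha ha0 hlog n
    _ = D ^ a 0 := (rpow_def_of_pos hD _).symm

theorem mul_sum_le_sum_mul_of_lt_inv_sum_mul {ι : Type*} {s : Finset ι} {w v : ι → ℝ}
    (hw : ∀ i ∈ s, 0 ≤ w i) {κ : ℝ} (h : κ < (∑ i ∈ s, w i)⁻¹ * ∑ i ∈ s, w i * v i) :
    κ * ∑ i ∈ s, w i ≤ ∑ i ∈ s, w i * v i := by
  rcases (sum_nonneg hw).eq_or_lt with hzero | hpos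
  · have hw0 := (sum_eq_zero_iff_of_nonneg hw).1 hzero.symm
    rw [← hzero, mul_zero]
    exact (sum_eq_zero fun i hi => by rw [hw0 i hi, zero_mul]).ge
  · rw [mul_comm]
    exact ((lt_inv_mul_iff₀ hpos).1 h).le

structure MemFd {E : Type*} [TopologicalSpace E] (d : ℝ) (f : E → ℝ) : Prop where
  continuous : Continuous f
  one_le : ∀ y, 1 ≤ f y
  le_mul : ∀ y z, f y ≤ d * f z

namespace MemFd

variable {E : Type*} [TopologicalSpace E] {d : ℝ} {f : E → ℝ}

theorem pos (hf : MemFd d f) (y : E) : 0 < f y := one_pos.trans_le (hf.one_le y)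

theorem one_le_const (hf : MemFd d f) (y : E) : 1 ≤ d := by
  nlinarith [hf.le_mul y y, hf.one_le y]

theorem rpow (hf : MemFd d f) {a : ℝ} (ha : 0 ≤ a) : MemFd (d ^ a) fun y => f y ^ a where
  continuous := hf.continuous.rpow_const fun _ => Or.inr ha
  one_le y := one_le_rpow (hf.one_le y) ha
  le_mul y z := by
    rw [← mul_rpow (zero_le_one.trans (hf.one_le_const y)) (hf.pos z).le]
    exact rpow_le_rpow (hf.pos y).le (hf.le_mul y z) ha

theorem exists_le (hf : MemFd d f) : ∃ B, ∀ y, f y ≤ B := by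
  rcases isEmpty_or_nonempty E with hE | ⟨⟨y₀⟩⟩
  · exact ⟨0, fun y => isEmptyElim y⟩
  · exact ⟨d * f y₀, fun y => hf.le_mul y y₀⟩

variable [MeasurableSpace E] [OpensMeasurableSpace E]

theorem integrable_comp (hf : MemFd d f) {Ω : Type*} [MeasurableSpace Ω] {u : Ω → E}
    (hu : Measurable u) (μ : Measure Ω) [IsFiniteMeasure μ] :
    Integrable (fun ω => f (u ω)) μ := by
  obtain ⟨B, hB⟩ := hf.exists_le
  refine .of_bound (hf.continuous.measurable.comp hu).aestronglyMeasurable B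
    (ae_of_all _ fun ω => ?_)
  rw [Real.norm_of_nonneg (hf.pos _).le]
  exact hB _

section Integral

variable (ν : Measure E) [IsProbabilityMeasure ν]

theorem one_le_integral (hf : MemFd d f) : 1 ≤ ∫ y, f y ∂ν := by
  simpa using integral_mono (integrable_const 1) (hf.integrable_comp measurable_id ν) hf.one_le

theorem integral_pos (hf : MemFd d f) : 0 < ∫ y, f y ∂ν := one_pos.trans_le (hf.one_le_integral ν)

theorem le_mul_integral (hf : MemFd d f) (y : E) : f y ≤ d * ∫ z, f z ∂ν := by
  rw [← integral_const_mul]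
  simpa using integral_mono (integrable_const (f y))
    ((hf.integrable_comp measurable_id ν).const_mul d) (hf.le_mul y)

theorem integral_le_mul (hf : MemFd d f) (y : E) : ∫ z, f z ∂ν ≤ d * f y := by
  simpa using integral_mono (hf.integrable_comp measurable_id ν) (integrable_const (d * f y))
    fun z => hf.le_mul z y

theorem div_integral_le (hf : MemFd d f) (y : E) : f y / ∫ z, f z ∂ν ≤ d :=
  (div_le_iff₀ (hf.integral_pos ν)).2 (hf.le_mul_integral ν y)

theorem div_integral_rpow_le (hf : MemFd d f) (y : E) {a : ℝ} (ha0 : 0 ≤ a) (ha1 : a ≤ 1) :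
    (f y / ∫ z, f z ∂ν) ^ a ≤ d :=
  (rpow_le_rpow (div_pos (hf.pos y) (hf.integral_pos ν)).le (hf.div_integral_le ν y) ha0).trans
    (rpow_le_self_of_one_le (hf.one_le_const y) ha1)

theorem abs_log_div_integral_le (hf : MemFd d f) (y : E) :
    |log (f y / ∫ z, f z ∂ν)| ≤ log d := by
  have hd : 0 < d := one_pos.trans_le (hf.one_le_const y)
  have hr : 0 < f y / ∫ z, f z ∂ν := div_pos (hf.pos y) (hf.integral_pos ν)
  refine abs_le.2 ⟨?_, log_le_log hr (hf.div_integral_le ν y)⟩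
  rw [← log_inv]
  refine log_le_log (inv_pos.2 hd) ?_
  rw [inv_le_comm₀ hd hr, inv_div, div_le_iff₀ (hf.pos y)]
  exact hf.integral_le_mul ν y

theorem integral_rpow_le_rpow_integral (hf : MemFd d f) {a : ℝ} (ha0 : 0 ≤ a) (ha1 : a ≤ 1) :
    ∫ y, f y ^ a ∂ν ≤ (∫ y, f y ∂ν) ^ a :=
  (concaveOn_rpow ha0 ha1).le_map_integral (continuous_rpow_const ha0).continuousOn isClosed_Ici
    (ae_of_all _ fun y => (hf.pos y).le) (hf.integrable_comp measurable_id ν)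
    ((hf.rpow ha0).integrable_comp measurable_id ν)

end Integral

variable {P : Kernel E E}

theorem measurable_integral (hf : MemFd d f) : Measurable fun y => ∫ z, f z ∂(P y) :=
  hf.continuous.stronglyMeasurable.integral_kernel.measurable

theorem measurable_div_integral_rpow (hf : MemFd d f) {Ω : Type*} {m : MeasurableSpace Ω}
    {u v : Ω → E} (hu : Measurable u) (hv : Measurable v) (a : ℝ) :
    Measurable fun ω => (f (u ω) / ∫ z, f z ∂(P (v ω))) ^ a :=
  ((hf.continuous.measurable.comp hu).div (hf.measurable_integral.comp hv)).pow_const a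

end MemFd

def IsFellerKernel {E : Type*} [TopologicalSpace E] [MeasurableSpace E] (P : Kernel E E) :
    Prop :=
  ∀ g : E → ℝ, Continuous g → (∀ y, |g y| ≤ 1) → Continuous fun y => ∫ z, g z ∂(P y)

theorem IsFellerKernel.continuous_integral {E : Type*} [TopologicalSpace E] [MeasurableSpace E]
    {P : Kernel E E} (hP : IsFellerKernel P) {g : E → ℝ}
    (hg : Continuous g) {B : ℝ} (hB : ∀ y, |g y| ≤ B) :
    Continuous fun y => ∫ z, g z ∂(P y) := by
  have hc : 0 < max B 1 := lt_max_of_lt_right one_pos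
  have hscaled := hP (fun z => g z / max B 1) (hg.div_const _) fun y => by
    rw [abs_div, abs_of_pos hc, div_le_one hc]
    exact (hB y).trans (le_max_left _ _)
  convert hscaled.const_mul (max B 1) using 2 with y
  rw [integral_div, mul_div_cancel₀ _ hc.ne']

section Kernel

variable {E : Type*} [TopologicalSpace E] [MeasurableSpace E] {P : Kernel E E} {d : ℝ}
  {f : E → ℝ}

theorem MemFd.continuous_integral (hf : MemFd d f) (hP : IsFellerKernel P) :
    Continuous fun y => ∫ z, f z ∂(P y) := by
  obtain ⟨B, hB⟩ := hf.exists_le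
  exact hP.continuous_integral hf.continuous fun y => (abs_of_pos (hf.pos y)).trans_le (hB y)

variable [OpensMeasurableSpace E] [IsMarkovKernel P]

theorem MemFd.isOpen_setOf_lt_integral_log (hf : MemFd d f) (hP : IsFellerKernel P) (κ : ℝ) :
    IsOpen {ζ : ProbabilityMeasure E |
      κ < ∫ y, log (f y / ∫ z, f z ∂(P y)) ∂(ζ : Measure E)} := by
  have hcont : Continuous fun y => log (f y / ∫ z, f z ∂(P y)) :=
    (hf.continuous.div (hf.continuous_integral hP) fun y => (hf.integral_pos (P y)).ne').log
      fun y => (div_pos (hf.pos y) (hf.integral_pos (P y))).ne'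
  let logRatio : BoundedContinuousFunction E ℝ :=
    .ofNormedAddCommGroup _ hcont (log d) fun y => hf.abs_log_div_integral_le (P y) y
  exact isOpen_Ioi.preimage
    (ProbabilityMeasure.continuous_integral_boundedContinuousFunction logRatio)

theorem MemFd.prod_div_integral_rpow_le_mul (hf : MemFd d f) {a : ℕ → ℝ} (ha : Antitone a)
    (ha0 : ∀ j, 0 ≤ a j) (ha1 : a 0 ≤ 1) (x : ℕ → E) (n : ℕ) :
    ∏ j ∈ range n, (f (x j) / ∫ z, f z ∂(P (x j))) ^ a j ≤
      d * ∏ j ∈ range n, (f (x (j + 1)) / ∫ z, f z ∂(P (x j))) ^ a j := by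
  have htelescope : ∏ j ∈ range n, (f (x j) / f (x (j + 1))) ^ a j ≤ d :=
    (prod_div_succ_rpow_le_rpow ha ha0 (fun j => hf.pos _) (fun j l => hf.le_mul _ _) n).trans
      (rpow_le_self_of_one_le (hf.one_le_const (x 0)) ha1)
  have hsplit : ∏ j ∈ range n, (f (x j) / ∫ z, f z ∂(P (x j))) ^ a j =
      (∏ j ∈ range n, (f (x (j + 1)) / ∫ z, f z ∂(P (x j))) ^ a j) *
        ∏ j ∈ range n, (f (x j) / f (x (j + 1))) ^ a j := by
    rw [← prod_mul_distrib]
    refine prod_congr rfl fun j _ => ?_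
    rw [← mul_rpow (div_pos (hf.pos _) (hf.integral_pos _)).le (div_pos (hf.pos _) (hf.pos _)).le]
    congr 1
    field_simp [(hf.pos (x (j + 1))).ne']
  rw [hsplit, mul_comm d]
  exact mul_le_mul_of_nonneg_left htelescope
    (prod_nonneg fun j _ => rpow_nonneg (div_pos (hf.pos _) (hf.integral_pos _)).le _)

end Kernel

theorem IsCompact.exists_fin_subcover {X ι : Type*} [TopologicalSpace X] {C : Set X}
    (hC : IsCompact C) (U : ι → Set X) (hU : ∀ i, IsOpen (U i)) (hCU : C ⊆ ⋃ i, U i) :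
    ∃ (m : ℕ) (b : Fin m → ι), C ⊆ ⋃ j, U (b j) := by
  classical
  obtain ⟨t, ht⟩ := hC.elim_finite_subcover U hU hCU
  refine ⟨t.card, fun j => t.equivFin.symm j, fun x hx => ?_⟩
  obtain ⟨i, hi, hxi⟩ := Set.mem_iUnion₂.1 (ht hx)
  exact Set.mem_iUnion.2 ⟨t.equivFin ⟨i, hi⟩, by simpa using hxi⟩

theorem integral_discountedEmpirical {Ω E : Type*} [MeasurableSpace E] {φ : ℕ → ℝ}
    (hφ : ∀ i, 0 ≤ φ i) (k n : ℕ) (X : ℕ → Ω → E) (ω : Ω) {h : E → ℝ}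
    (hh : StronglyMeasurable h) :
    ∫ y, h y ∂(discountedEmpirical φ k n X ω) =
      (∑ l ∈ range n, φ (k + l))⁻¹ * ∑ l ∈ range n, φ (k + l) * h (X l ω) := by
  rw [discountedEmpirical, integral_smul_measure,
    integral_finsetSum_measure fun i _ =>
      (integrable_dirac' hh enorm_lt_top).smul_measure ENNReal.ofReal_ne_top,
    ← ENNReal.ofReal_sum_of_nonneg fun i _ => hφ i, ENNReal.toReal_inv,
    ENNReal.toReal_ofReal (sum_nonneg fun i _ => hφ i), smul_eq_mul,
    sum_Ico_eq_sum_range, sum_Ico_eq_sum_range, Nat.add_sub_cancel]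
  congr 1
  refine sum_congr rfl fun l _ => ?_
  rw [integral_smul_measure, integral_dirac' _ _ hh, ENNReal.toReal_ofReal (hφ _), smul_eq_mul,
    Nat.add_sub_cancel_left]

def HasTransitionKernel {Ω E : Type*} {m0 : MeasurableSpace Ω} [TopologicalSpace E]
    [MeasurableSpace E] (μ : Measure Ω) (ℱ : Filtration ℕ m0) (X : ℕ → Ω → E) (P : Kernel E E) :
    Prop :=
  ∀ g : E → ℝ, Continuous g → ∀ i,
    μ[(fun ω => g (X (i + 1) ω)) | ℱ i] =ᵐ[μ] fun ω => ∫ y, g y ∂(P (X i ω))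

section MarkovChain

variable {Ω E : Type*} {m0 : MeasurableSpace Ω} {μ : Measure Ω} [IsFiniteMeasure μ]
  {ℱ : Filtration ℕ m0} [MeasurableSpace E] {P : Kernel E E} {X : ℕ → Ω → E}

theorem integral_mul_comp_succ_eq {g : E → ℝ} {F : Ω → ℝ} {i : ℕ}
    (hg : μ[(fun ω => g (X (i + 1) ω)) | ℱ i] =ᵐ[μ] fun ω => ∫ y, g y ∂(P (X i ω)))
    (hF : StronglyMeasurable[ℱ i] F) (hFg : Integrable (fun ω => F ω * g (X (i + 1) ω)) μ)
    (hgX : Integrable (fun ω => g (X (i + 1) ω)) μ) :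
    ∫ ω, F ω * g (X (i + 1) ω) ∂μ = ∫ ω, F ω * ∫ y, g y ∂(P (X i ω)) ∂μ := by
  rw [← integral_condExp (ℱ.le i)]
  refine integral_congr_ae ?_
  filter_upwards [condExp_mul_of_stronglyMeasurable_left hF hFg hgX, hg] with ω hmul hω
  rw [← hω]
  exact hmul

variable [TopologicalSpace E] [OpensMeasurableSpace E] [IsMarkovKernel P] {d : ℝ} {f : E → ℝ}

theorem MemFd.integrable_prod_div_integral_rpow (hf : MemFd d f)
    {u v : ℕ → Ω → E} (hu : ∀ j, Measurable (u j)) (hv : ∀ j, Measurable (v j)) {a : ℕ → ℝ}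
    (ha0 : ∀ j, 0 ≤ a j) (ha1 : ∀ j, a j ≤ 1) (n : ℕ) :
    Integrable (fun ω => ∏ j ∈ range n, (f (u j ω) / ∫ z, f z ∂(P (v j ω))) ^ a j) μ := by
  have hnonneg : ∀ ω j, 0 ≤ (f (u j ω) / ∫ z, f z ∂(P (v j ω))) ^ a j := fun ω j =>
    rpow_nonneg (div_pos (hf.pos _) (hf.integral_pos _)).le _
  refine .of_bound (Finset.measurable_prod _ fun j _ =>
    hf.measurable_div_integral_rpow (hu j) (hv j) (a j)).aestronglyMeasurable (d ^ n)
    (ae_of_all _ fun ω => ?_)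
  rw [norm_of_nonneg (prod_nonneg fun j _ => hnonneg ω j)]
  calc ∏ j ∈ range n, (f (u j ω) / ∫ z, f z ∂(P (v j ω))) ^ a j
      ≤ ∏ _j ∈ range n, d :=
        prod_le_prod (fun j _ => hnonneg ω j) fun j _ => hf.div_integral_rpow_le _ _ (ha0 j) (ha1 j)
    _ = d ^ n := by rw [prod_const, card_range]

theorem MemFd.integral_mul_div_integral_rpow_le (hf : MemFd d f)
    (hX : ∀ i, Measurable[ℱ i] (X i)) {n : ℕ} {a : ℝ} (ha0 : 0 ≤ a) (ha1 : a ≤ 1)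
    (hMarkov : μ[(fun ω => f (X (n + 1) ω) ^ a) | ℱ n] =ᵐ[μ]
      fun ω => ∫ y, f y ^ a ∂(P (X n ω)))
    {F : Ω → ℝ} (hF : StronglyMeasurable[ℱ n] F) (hF0 : ∀ ω, 0 ≤ F ω) (hFint : Integrable F μ) :
    ∫ ω, F ω * (f (X (n + 1) ω) / ∫ z, f z ∂(P (X n ω))) ^ a ∂μ ≤ ∫ ω, F ω ∂μ := by
  have hXm : ∀ i, Measurable (X i) := fun i => (hX i).mono (ℱ.le i) le_rfl
  set q : Ω → ℝ := fun ω => (∫ z, f z ∂(P (X n ω))) ^ a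
  have hq : ∀ ω, 0 < q ω := fun ω => rpow_pos_of_pos (hf.integral_pos _) a
  have hFq : StronglyMeasurable[ℱ n] fun ω => F ω * (q ω)⁻¹ :=
    hF.mul ((hf.measurable_integral.comp (hX n)).pow_const a).inv.stronglyMeasurable
  have hsplit : (fun ω => F ω * (f (X (n + 1) ω) / ∫ z, f z ∂(P (X n ω))) ^ a) =
      fun ω => F ω * (q ω)⁻¹ * f (X (n + 1) ω) ^ a := by
    ext ω
    rw [div_rpow (hf.pos _).le (hf.integral_pos _).le]
    ring
  have hint : Integrable (fun ω => F ω * (f (X (n + 1) ω) / ∫ z, f z ∂(P (X n ω))) ^ a) μ := by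
    simpa only [mul_comm (F _)] using hFint.bdd_mul
      (hf.measurable_div_integral_rpow (hXm (n + 1)) (hXm n) a).aestronglyMeasurable
      (ae_of_all _ fun ω => by
        rw [norm_of_nonneg (rpow_nonneg (div_pos (hf.pos _) (hf.integral_pos _)).le _)]
        exact hf.div_integral_rpow_le _ _ ha0 ha1)
  rw [hsplit] at hint ⊢
  rw [integral_mul_comp_succ_eq (g := fun y => f y ^ a) hMarkov hFq hint
    ((hf.rpow ha0).integrable_comp (hXm _) μ)]
  refine integral_mono_of_nonneg (ae_of_all _ fun ω => ?_) hFint (ae_of_all _ fun ω => ?_)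
  · exact mul_nonneg (mul_nonneg (hF0 ω) (inv_pos.2 (hq ω)).le)
      (integral_nonneg fun y => rpow_nonneg (hf.pos y).le a)
  · calc F ω * (q ω)⁻¹ * ∫ y, f y ^ a ∂(P (X n ω)) ≤ F ω * (q ω)⁻¹ * q ω :=
          mul_le_mul_of_nonneg_left (hf.integral_rpow_le_rpow_integral _ ha0 ha1)
            (mul_nonneg (hF0 ω) (inv_pos.2 (hq ω)).le)
      _ = F ω := by rw [mul_assoc, inv_mul_cancel₀ (hq ω).ne', mul_one]

theorem MemFd.integral_prod_div_integral_rpow_le_one [IsProbabilityMeasure μ] (hf : MemFd d f)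
    (hX : ∀ i, Measurable[ℱ i] (X i))
    (hMarkov : HasTransitionKernel μ ℱ X P)
    {a : ℕ → ℝ} (ha0 : ∀ j, 0 ≤ a j) (ha1 : ∀ j, a j ≤ 1) (n : ℕ) :
    ∫ ω, ∏ j ∈ range n, (f (X (j + 1) ω) / ∫ z, f z ∂(P (X j ω))) ^ a j ∂μ ≤ 1 := by
  induction n with
  | zero => simp
  | succ n ih =>
    have hXn : ∀ j ≤ n, Measurable[ℱ n] (X j) := fun j hj => (hX j).mono (ℱ.mono hj) le_rfl
    have hM : StronglyMeasurable[ℱ n] fun ω =>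
        ∏ j ∈ range n, (f (X (j + 1) ω) / ∫ z, f z ∂(P (X j ω))) ^ a j :=
      (Finset.measurable_prod _ fun j hj => hf.measurable_div_integral_rpow
        (hXn _ (mem_range.1 hj)) (hXn _ (mem_range.1 hj).le) (a j)).stronglyMeasurable
    simp only [prod_range_succ]
    refine (hf.integral_mul_div_integral_rpow_le hX (ha0 n) (ha1 n)
      (hMarkov _ (hf.rpow (ha0 n)).continuous n) hM
      (fun ω => prod_nonneg fun j _ => rpow_nonneg (div_pos (hf.pos _) (hf.integral_pos _)).le _)
      (hf.integrable_prod_div_integral_rpow (fun j => (hX (j + 1)).mono (ℱ.le _) le_rfl)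
        (fun j => (hX j).mono (ℱ.le _) le_rfl) ha0 ha1 n)).trans ih

end MarkovChain

section Chernoff

variable {Ω E : Type*} {m0 : MeasurableSpace Ω} {μ : Measure Ω} [IsProbabilityMeasure μ]
  {ℱ : Filtration ℕ m0} [TopologicalSpace E] [MeasurableSpace E] [OpensMeasurableSpace E]
  {P : Kernel E E} [IsMarkovKernel P] {X : ℕ → Ω → E} {d : ℝ} {f : E → ℝ}

theorem MemFd.measureReal_exp_le_prod_div_integral_rpow_le (hf : MemFd d f)
    (hX : ∀ i, Measurable[ℱ i] (X i))
    (hMarkov : HasTransitionKernel μ ℱ X P)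
    {a : ℕ → ℝ} (ha : Antitone a) (ha0 : ∀ j, 0 ≤ a j) (ha1 : ∀ j, a j ≤ 1) (t : ℝ) (n : ℕ) :
    μ.real {ω | exp t ≤ ∏ j ∈ range n, (f (X j ω) / ∫ z, f z ∂(P (X j ω))) ^ a j} ≤
      d * exp (-t) := by
  have hXm : ∀ i, Measurable (X i) := fun i => (hX i).mono (ℱ.le i) le_rfl
  obtain ⟨ω₀⟩ := nonempty_of_isProbabilityMeasure μ
  have hZint := hf.integrable_prod_div_integral_rpow (μ := μ) (P := P) hXm hXm ha0 ha1 n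
  have hEZ : ∫ ω, ∏ j ∈ range n, (f (X j ω) / ∫ z, f z ∂(P (X j ω))) ^ a j ∂μ ≤ d :=
    calc _ ≤ ∫ ω, d * ∏ j ∈ range n, (f (X (j + 1) ω) / ∫ z, f z ∂(P (X j ω))) ^ a j ∂μ :=
          integral_mono hZint
            ((hf.integrable_prod_div_integral_rpow (fun j => hXm (j + 1)) hXm ha0 ha1 n).const_mul
              d)
            fun ω => hf.prod_div_integral_rpow_le_mul ha ha0 (ha1 0) (fun j => X j ω) n
      _ = d * ∫ ω, ∏ j ∈ range n, (f (X (j + 1) ω) / ∫ z, f z ∂(P (X j ω))) ^ a j ∂μ :=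
          integral_const_mul d _
      _ ≤ d * 1 := mul_le_mul_of_nonneg_left
          (hf.integral_prod_div_integral_rpow_le_one hX hMarkov ha0 ha1 n)
          (zero_le_one.trans (hf.one_le_const (X 0 ω₀)))
      _ = d := mul_one d
  have hmarkovIneq := mul_meas_ge_le_integral_of_nonneg (ae_of_all _ fun ω =>
    prod_nonneg fun j _ => rpow_nonneg (div_pos (hf.pos _) (hf.integral_pos _)).le _) hZint (exp t)
  rw [exp_neg, ← div_eq_mul_inv, le_div_iff₀ (exp_pos t), mul_comm]
  exact hmarkovIneq.trans hEZ

theorem MemFd.measureReal_lt_integral_log_le (hf : MemFd d f)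
    (hX : ∀ i, Measurable[ℱ i] (X i))
    (hMarkov : HasTransitionKernel μ ℱ X P)
    {φ : ℕ → ℝ} (hφ : Antitone φ) (hφ0 : ∀ i, 0 ≤ φ i) (hφ1 : ∀ i, φ i ≤ 1) (κ : ℝ) (k n : ℕ) :
    μ.real {ω | κ < ∫ y, log (f y / ∫ z, f z ∂(P y)) ∂(discountedEmpirical φ k n X ω)} ≤
      d * exp (-κ * ∑ i ∈ Ico k (n + k), φ i) := by
  have hlog : StronglyMeasurable fun y => log (f y / ∫ z, f z ∂(P y)) :=
    (hf.continuous.measurable.div hf.measurable_integral).log.stronglyMeasurable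
  rw [sum_Ico_eq_sum_range, Nat.add_sub_cancel, neg_mul]
  refine (measureReal_mono fun ω hω => ?_).trans
    (hf.measureReal_exp_le_prod_div_integral_rpow_le hX hMarkov (a := fun j => φ (k + j))
      (fun i j hij => hφ (Nat.add_le_add_left hij k)) (fun j => hφ0 _) (fun j => hφ1 _) _ n)
  rw [Set.mem_ofPred_eq, integral_discountedEmpirical hφ0 k n X ω hlog] at hω
  calc exp (κ * ∑ l ∈ range n, φ (k + l))
      ≤ exp (∑ l ∈ range n, φ (k + l) * log (f (X l ω) / ∫ z, f z ∂(P (X l ω)))) :=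
        exp_le_exp.2 (mul_sum_le_sum_mul_of_lt_inv_sum_mul (fun l _ => hφ0 _) hω)
    _ = ∏ l ∈ range n, (f (X l ω) / ∫ z, f z ∂(P (X l ω))) ^ φ (k + l) := by
        rw [exp_sum]
        refine prod_congr rfl fun l _ => ?_
        rw [rpow_def_of_pos (div_pos (hf.pos _) (hf.integral_pos _)), mul_comm]

end Chernoff

theorem compact_rate_set_covering_bound_general
    {Ω E : Type*} {m0 : MeasurableSpace Ω}
    [MetricSpace E] [MeasurableSpace E] [BorelSpace E]
    (μ : Measure Ω) [IsProbabilityMeasure μ]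
    (ℱ : Filtration ℕ m0)
    (P : Kernel E E) [IsMarkovKernel P]
    (hFeller : ∀ g : E → ℝ, Continuous g → (∀ y, |g y| ≤ 1) →
      Continuous fun y => ∫ z, g z ∂(P y))
    (X : ℕ → Ω → E) (hX : ∀ i, Measurable[ℱ i] (X i))
    (hMarkov : ∀ (g : E → ℝ), Continuous g → ∀ i,
      μ[(fun ω => g (X (i + 1) ω)) | ℱ i]
        =ᵐ[μ] fun ω => ∫ y, g y ∂(P (X i ω)))
    (φ : ℕ → ℝ)
    (hφpos : ∀ i, 0 < φ i) (hφle : ∀ i, φ i ≤ 1)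
    (hφmono : ∀ i j, i ≤ j → φ j ≤ φ i)
    (d κ : ℝ)
    (C : Set (ProbabilityMeasure E)) (hC : IsCompact C)
    (hinf : ∀ ζ ∈ C, ∃ f : E → ℝ, Continuous f ∧ (∀ y, 1 ≤ f y) ∧
      (∀ y z, f y ≤ d * f z) ∧
      κ < ∫ y, Real.log (f y / ∫ z, f z ∂(P y)) ∂(ζ : Measure E)) :
    ∃ (m : ℕ) (g : Fin m → E → ℝ),
      (∀ j, Continuous (g j)) ∧ (∀ j y, 1 ≤ g j y) ∧
      (∀ j y z, g j y ≤ d * g j z) ∧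
      C ⊆ ⋃ j : Fin m, {ζ : ProbabilityMeasure E |
        κ < ∫ y, Real.log (g j y / ∫ z, g j z ∂(P y)) ∂(ζ : Measure E)} ∧
      ∀ k n : ℕ,
        (μ {ω | ∃ ζ ∈ C, (ζ : Measure E) = discountedEmpirical φ k n X ω}).toReal
          ≤ m * d * Real.exp (-κ * ∑ i ∈ Finset.Ico k (n + k), φ i) := by
  choose! f hfc hf1 hfd hfκ using hinf
  have hf : ∀ ζ ∈ C, MemFd d (f ζ) := fun ζ hζ => ⟨hfc ζ hζ, hf1 ζ hζ, hfd ζ hζ⟩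
  obtain ⟨m, b, hcover⟩ := hC.exists_fin_subcover
    (fun ζ : C => {ζ' : ProbabilityMeasure E |
      κ < ∫ y, log (f ζ y / ∫ z, f ζ z ∂(P y)) ∂(ζ' : Measure E)})
    (fun ζ => (hf ζ ζ.2).isOpen_setOf_lt_integral_log hFeller κ)
    fun ζ hζ => Set.mem_iUnion.2 ⟨⟨ζ, hζ⟩, hfκ ζ hζ⟩
  refine ⟨m, fun j => f (b j), fun j => hfc _ (b j).2, fun j => hf1 _ (b j).2,
    fun j => hfd _ (b j).2, hcover, fun k n => ?_⟩
  rw [← measureReal_def]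
  calc μ.real {ω | ∃ ζ ∈ C, (ζ : Measure E) = discountedEmpirical φ k n X ω}
      ≤ μ.real (⋃ j, {ω | κ < ∫ y, log (f (b j) y / ∫ z, f (b j) z ∂(P y))
          ∂(discountedEmpirical φ k n X ω)}) := by
        refine measureReal_mono fun ω ⟨ζ, hζ, hζω⟩ => ?_
        obtain ⟨j, hj⟩ := Set.mem_iUnion.1 (hcover hζ)
        exact Set.mem_iUnion.2 ⟨j, by simpa [hζω] using hj⟩
    _ ≤ ∑ j : Fin m, d * exp (-κ * ∑ i ∈ Ico k (n + k), φ i) :=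
        (measureReal_iUnion_fintype_le _).trans (sum_le_sum fun j _ =>
          (hf _ (b j).2).measureReal_lt_integral_log_le hX hMarkov (fun i j => hφmono i j)
            (fun i => (hφpos i).le) hφle κ k n)
    _ = m * d * exp (-κ * ∑ i ∈ Ico k (n + k), φ i) := by
        rw [sum_const, card_univ, Fintype.card_fin, nsmul_eq_mul, mul_assoc]

/-- If `C ⊆ P(E)` is compact and `inf_{ζ∈C} I_d(ζ) > κ > 0` (i.e. every `ζ ∈ C`
admits some `f ∈ F_d` with `∫ log(f/Pf) dζ > κ`), then `C` is covered by finitely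
many sets `{ζ : ∫ log(f_j/Pf_j) dζ > κ}` with `f_j ∈ F_d`, and consequently
`Q_{k,x}^n(C) ≤ m d exp(−κ Σ_{i=k}^{n+k-1} φ(i))`. -/
theorem compact_rate_set_covering_bound
    {Ω E : Type*} {m0 : MeasurableSpace Ω}
    [MetricSpace E] [MeasurableSpace E] [BorelSpace E]
    (μ : Measure Ω) [IsProbabilityMeasure μ]
    (ℱ : Filtration ℕ m0)
    (P : Kernel E E) [IsMarkovKernel P]
    (hFeller : ∀ g : E → ℝ, Continuous g → (∀ y, |g y| ≤ 1) →
      Continuous fun y => ∫ z, g z ∂(P y))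
    (X : ℕ → Ω → E) (hX : ∀ i, Measurable[ℱ i] (X i))
    (x : E) (hstart : ∀ᵐ ω ∂μ, X 0 ω = x)
    (hMarkov : ∀ (g : E → ℝ), Continuous g → ∀ i,
      μ[(fun ω => g (X (i + 1) ω)) | ℱ i]
        =ᵐ[μ] fun ω => ∫ y, g y ∂(P (X i ω)))
    (φ : ℕ → ℝ) (hφ0 : φ 0 = 1)
    (hφpos : ∀ i, 0 < φ i) (hφle : ∀ i, φ i ≤ 1)
    (hφmono : ∀ i j, i ≤ j → φ j ≤ φ i)
    (d κ : ℝ) (hd : 1 ≤ d) (hκ : 0 < κ)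
    (C : Set (ProbabilityMeasure E)) (hC : IsCompact C)
    (hinf : ∀ ζ ∈ C, ∃ f : E → ℝ, Continuous f ∧ (∀ y, 1 ≤ f y) ∧
      (∀ y z, f y ≤ d * f z) ∧
      κ < ∫ y, Real.log (f y / ∫ z, f z ∂(P y)) ∂(ζ : Measure E)) :
    ∃ (m : ℕ) (g : Fin m → E → ℝ),
      (∀ j, Continuous (g j)) ∧ (∀ j y, 1 ≤ g j y) ∧
      (∀ j y z, g j y ≤ d * g j z) ∧
      C ⊆ ⋃ j : Fin m, {ζ : ProbabilityMeasure E |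
        κ < ∫ y, Real.log (g j y / ∫ z, g j z ∂(P y)) ∂(ζ : Measure E)} ∧
      ∀ k n : ℕ,
        (μ {ω | ∃ ζ ∈ C, (ζ : Measure E) = discountedEmpirical φ k n X ω}).toReal
          ≤ m * d * Real.exp (-κ * ∑ i ∈ Finset.Ico k (n + k), φ i) :=
  compact_rate_set_covering_bound_general μ ℱ P hFeller X hX hMarkov φ hφpos hφle hφmono d κ C hC
    hinf
end

section
/- Let w : E → [0,∞) be bounded measurable, λ ∈ ℝ, and suppose for a controlled Markov chain (Xᵢ) with controls aᵢ that c(Xᵢ,aᵢ) ≤ w(Xᵢ) + λ − E[w(X_{i+1}) | F_i] almost surely for all i. Let φ : ℕ → (0,1] be nonincreasing. Then for all n, k, x: E_{k,x}[Σ_{i=k}^{n+k-1} φ(i) c(X_{i-k},a_{i-k})] ≤ λ·Σ_{i=k}^{n+k-1} φ(i) + φ(k)·w(x). -/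
/-
Taking expectations in the sub-solution inequality and using the tower property gives
`E c(X_j, a_j) ≤ b_j + λ - b_{j+1}` with `b_j = E w(X_j) ≥ 0` and `b_0 = w(x)`. Multiplying by the
weights and summing by parts, the terms `φ(j) (b_j - b_{j+1})` telescope up to the nonnegative
corrections `(φ(j) - φ(j+1)) b_{j+1}` and `φ(n) b_n`, which are discarded.
-/

open MeasureTheory Finset

theorem sum_range_mul_sub_succ_le {f b : ℕ → ℝ} (hf : Antitone f) (hf0 : ∀ j, 0 ≤ f j)
    (hb : ∀ j, 0 ≤ b j) (n : ℕ) :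
    ∑ j ∈ range n, f j * (b j - b (j + 1)) ≤ f 0 * b 0 :=
  calc ∑ j ∈ range n, f j * (b j - b (j + 1))
      ≤ ∑ j ∈ range n, (f j * b j - f (j + 1) * b (j + 1)) := by
        gcongr with j
        nlinarith [hf (Nat.le_succ j), hb (j + 1)]
    _ = f 0 * b 0 - f n * b n := sum_range_sub' (fun j => f j * b j) n
    _ ≤ f 0 * b 0 := sub_le_self _ (mul_nonneg (hf0 n) (hb n))

theorem sum_range_mul_le_of_le_sub_succ {f y b : ℕ → ℝ} {lam : ℝ} (hf : Antitone f)
    (hf0 : ∀ j, 0 ≤ f j) (hb : ∀ j, 0 ≤ b j) (hy : ∀ j, y j ≤ b j + lam - b (j + 1)) (n : ℕ) :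
    ∑ j ∈ range n, f j * y j ≤ lam * ∑ j ∈ range n, f j + f 0 * b 0 :=
  calc ∑ j ∈ range n, f j * y j
      ≤ ∑ j ∈ range n, (lam * f j + f j * (b j - b (j + 1))) := by
        gcongr with j
        nlinarith [mul_le_mul_of_nonneg_left (hy j) (hf0 j)]
    _ = lam * ∑ j ∈ range n, f j + ∑ j ∈ range n, f j * (b j - b (j + 1)) := by
        rw [sum_add_distrib, mul_sum]
    _ ≤ lam * ∑ j ∈ range n, f j + f 0 * b 0 := by
        gcongr
        exact sum_range_mul_sub_succ_le hf hf0 hb n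

theorem integral_le_sub_integral_of_ae_le_sub_condExp {Ω : Type*} {m m0 : MeasurableSpace Ω}
    {μ : Measure Ω} (hm : m ≤ m0) [SigmaFinite (μ.trim hm)] {f v g : Ω → ℝ}
    (hf : Integrable f μ) (hv : Integrable v μ) (h : ∀ᵐ ω ∂μ, f ω ≤ v ω - μ[g | m] ω) :
    ∫ ω, f ω ∂μ ≤ ∫ ω, v ω ∂μ - ∫ ω, g ω ∂μ :=
  calc ∫ ω, f ω ∂μ ≤ ∫ ω, (v ω - μ[g | m] ω) ∂μ :=
        integral_mono_ae hf (hv.sub integrable_condExp) h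
    _ = ∫ ω, v ω ∂μ - ∫ ω, g ω ∂μ := by
        rw [integral_sub hv integrable_condExp, integral_condExp hm]

theorem discounted_reward_subsolution_bound_general
    {Ω E U : Type*} {m0 : MeasurableSpace Ω} [MeasurableSpace E]
    (μ : Measure Ω) [IsProbabilityMeasure μ]
    (ℱ : Filtration ℕ m0)
    (X : ℕ → Ω → E) (hX : ∀ i, Measurable[ℱ i] (X i))
    (a : ℕ → Ω → U)
    (c : E → U → ℝ)
    (w : E → ℝ) (hwm : Measurable w)
    (hw0 : ∀ y, 0 ≤ w y) (Cw : ℝ) (hwb : ∀ y, w y ≤ Cw)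
    (lam : ℝ)
    (x : E) (hstart : ∀ᵐ ω ∂μ, X 0 ω = x)
    (hint : ∀ i, Integrable (fun ω => c (X i ω) (a i ω)) μ)
    (hsub : ∀ i, ∀ᵐ ω ∂μ,
      c (X i ω) (a i ω) ≤ w (X i ω) + lam
        - (μ[(fun ω' => w (X (i + 1) ω')) | ℱ i]) ω)
    (φ : ℕ → ℝ) (hφpos : ∀ i, 0 < φ i)
    (hφmono : ∀ i j, i ≤ j → φ j ≤ φ i)
    (k n : ℕ) :
    ∫ ω, ∑ i ∈ Finset.Ico k (n + k),
        φ i * c (X (i - k) ω) (a (i - k) ω) ∂μ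
      ≤ lam * ∑ i ∈ Finset.Ico k (n + k), φ i + φ k * w x := by
  have hwX : ∀ j, Integrable (fun ω => w (X j ω)) μ := fun j =>
    .of_bound (hwm.comp ((hX j).mono (ℱ.le j) le_rfl)).aestronglyMeasurable Cw
      (ae_of_all _ fun ω => by rw [Real.norm_of_nonneg (hw0 _)]; exact hwb _)
  have hb0 : ∫ ω, w (X 0 ω) ∂μ = w x := by
    simp [integral_congr_ae (hstart.mono fun ω hω => congrArg w hω)]
  have hstep : ∀ j, ∫ ω, c (X j ω) (a j ω) ∂μ
      ≤ ∫ ω, w (X j ω) ∂μ + lam - ∫ ω, w (X (j + 1) ω) ∂μ := fun j => by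
    simpa [integral_add (hwX j) (integrable_const lam)] using
      integral_le_sub_integral_of_ae_le_sub_condExp (ℱ.le j) (hint j)
        ((hwX j).add (integrable_const lam)) (hsub j)
  simp only [sum_Ico_eq_sum_range, Nat.add_sub_cancel, Nat.add_sub_cancel_left]
  rw [integral_finsetSum _ fun j _ => (hint j).const_mul (φ (k + j))]
  simp only [integral_const_mul]
  simpa only [add_zero, hb0] using sum_range_mul_le_of_le_sub_succ (f := fun j => φ (k + j))
    (fun i j hij => hφmono _ _ (by omega)) (fun j => (hφpos _).le)
    (fun j => integral_nonneg fun ω => hw0 _) hstep n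

/-- Abel-summation bound for the discounted reward: if `w ≥ 0` is bounded measurable,
`φ : ℕ → (0,1]` is nonincreasing, the chain starts at `x`, and the sub-solution
inequality `c(X_i,a_i) ≤ w(X_i) + λ − E[w(X_{i+1})|F_i]` holds a.s. for all `i`, then
`E_{k,x}[Σ_{i=k}^{n+k-1} φ(i) c(X_{i-k},a_{i-k})] ≤ λ Σ_{i=k}^{n+k-1} φ(i) + φ(k) w(x)`. -/
theorem discounted_reward_subsolution_bound
    {Ω E U : Type*} {m0 : MeasurableSpace Ω} [MeasurableSpace E]
    (μ : Measure Ω) [IsProbabilityMeasure μ]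
    (ℱ : Filtration ℕ m0)
    (X : ℕ → Ω → E) (hX : ∀ i, Measurable[ℱ i] (X i))
    (a : ℕ → Ω → U)
    (c : E → U → ℝ) (Cc : ℝ) (hcb : ∀ y u, |c y u| ≤ Cc)
    (w : E → ℝ) (hwm : Measurable w)
    (hw0 : ∀ y, 0 ≤ w y) (Cw : ℝ) (hwb : ∀ y, w y ≤ Cw)
    (lam : ℝ)
    (x : E) (hstart : ∀ᵐ ω ∂μ, X 0 ω = x)
    (hint : ∀ i, Integrable (fun ω => c (X i ω) (a i ω)) μ)
    (hsub : ∀ i, ∀ᵐ ω ∂μ,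
      c (X i ω) (a i ω) ≤ w (X i ω) + lam
        - (μ[(fun ω' => w (X (i + 1) ω')) | ℱ i]) ω)
    (φ : ℕ → ℝ) (hφpos : ∀ i, 0 < φ i) (hφle : ∀ i, φ i ≤ 1)
    (hφmono : ∀ i j, i ≤ j → φ j ≤ φ i)
    (k n : ℕ) :
    ∫ ω, ∑ i ∈ Finset.Ico k (n + k),
        φ i * c (X (i - k) ω) (a (i - k) ω) ∂μ
      ≤ lam * ∑ i ∈ Finset.Ico k (n + k), φ i + φ k * w x :=
  discounted_reward_subsolution_bound_general μ ℱ X hX a c w hwm hw0 Cw hwb lam x hstart hint hsub φ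
    hφpos hφmono k n
end

section
/- Let (Xₙ) be a Markov chain and w : E → [0,∞) bounded measurable, λ^γ ∈ ℝ, γ > 0, satisfying e^{γ c(x,a)} ≤ e^{w(x) + γλ^γ} / E[e^{w(X_{i+1})} | F_i, X_i = x, a_i = a] for all x, a. Let φ : ℕ → (0,1] be nonincreasing. Then E_{k,x}[exp(γ Σ_{i=k}^{n+k-1} φ(i) c(X_{i-k}, a_{i-k}))] ≤ exp(γ λ^γ Σ_{i=k}^{n+k-1} φ(i)) · exp(φ(k) w(x)) · exp(‖w‖·(φ(k) − φ(n+k−1))). -/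
/-!
Write `Y_j = e^{w(X_j)} ≥ 1` and `T_j = E[Y_{j+1} | ℱ_j]`. Raising the one-step inequality
`e^{γ c_j} ≤ e^{γλ} Y_j / T_j` to the power `ψ_j = φ(k + j) ∈ (0, 1]` and multiplying bounds the
integrand by `e^{γλ Σ ψ_j} ∏_{j<n} (Y_j / T_j)^{ψ_j}`. With the factor `Y_n^{ψ_n} ≥ 1` appended,
this product is a supermartingale: as `ψ` is nonincreasing and `Y ≥ 1`, the conditional Jensen
inequality for the concave map `y ↦ y^{ψ_n}` gives
`E[Y_{n+1}^{ψ_{n+1}} | ℱ_n] ≤ E[Y_{n+1}^{ψ_n} | ℱ_n] ≤ T_n^{ψ_n}`, which cancels the factor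
`T_n^{-ψ_n}`. Its expectation is therefore at most its initial value `e^{φ(k) w(x)}`.
-/

open MeasureTheory Finset

theorem Real.rpow_le_tangent {p y s : ℝ} (hp0 : 0 ≤ p) (hp1 : p ≤ 1) (hy : 0 ≤ y) (hs : 0 < s) :
    y ^ p ≤ p * s ^ (p - 1) * y + (1 - p) * s ^ p := by
  have hamgm : y ^ p * s ^ (1 - p) ≤ p * y + (1 - p) * s :=
    Real.geom_mean_le_arith_mean2_weighted hp0 (by linarith) hy hs.le (by ring)
  calc y ^ p = y ^ p * s ^ (1 - p) * s ^ (p - 1) := by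
        rw [mul_assoc, ← Real.rpow_add hs]; norm_num
    _ ≤ (p * y + (1 - p) * s) * s ^ (p - 1) := by gcongr
    _ = p * s ^ (p - 1) * y + (1 - p) * (s ^ (p - 1) * s) := by ring
    _ = p * s ^ (p - 1) * y + (1 - p) * s ^ p := by
        rw [← Real.rpow_add_one hs.ne' (p - 1)]; norm_num

section CondExp

variable {Ω : Type*} {m m0 : MeasurableSpace Ω} {μ : Measure Ω} [IsFiniteMeasure μ]

theorem ae_const_le_condExp (hm : m ≤ m0) {Y : Ω → ℝ} {c : ℝ} (hY : Integrable Y μ)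
    (hc : ∀ᵐ ω ∂μ, c ≤ Y ω) : ∀ᵐ ω ∂μ, c ≤ μ[Y | m] ω := by
  have h := condExp_mono (m := m) (integrable_const c) hY hc
  rw [condExp_const hm] at h
  exact h

theorem condExp_rpow_le_rpow_condExp (hm : m ≤ m0) {Y : Ω → ℝ} {p : ℝ} (hp0 : 0 ≤ p)
    (hp1 : p ≤ 1) (hY : Integrable Y μ) (hY1 : ∀ᵐ ω ∂μ, 1 ≤ Y ω) :
    μ[fun ω => Y ω ^ p | m] ≤ᵐ[μ] fun ω => μ[Y | m] ω ^ p := by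
  set T := μ[Y | m]
  have hT1 : ∀ᵐ ω ∂μ, 1 ≤ T ω := ae_const_le_condExp hm hY hY1
  have hTm : Measurable[m] T := stronglyMeasurable_condExp.measurable
  -- the tangent line of `y ↦ y ^ p` at `T ω`, with `m`-measurable coefficients
  set q : Ω → ℝ := fun ω => p * T ω ^ (p - 1)
  set r : Ω → ℝ := fun ω => (1 - p) * T ω ^ p
  have hqm : StronglyMeasurable[m] q := ((hTm.pow_const _).const_mul p).stronglyMeasurable
  have hrm : StronglyMeasurable[m] r := ((hTm.pow_const _).const_mul _).stronglyMeasurable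
  have hqY : Integrable (q * Y) μ := by
    refine hY.bdd_mul (c := 1) (hqm.mono hm).aestronglyMeasurable ?_
    filter_upwards [hT1] with ω hω
    have : T ω ^ (p - 1) ≤ 1 := Real.rpow_le_one_of_one_le_of_nonpos hω (by linarith)
    rw [Real.norm_of_nonneg (by positivity)]
    nlinarith
  have hr : Integrable r μ := by
    refine (integrable_condExp (m := m) (f := Y)).mono' (hrm.mono hm).aestronglyMeasurable ?_
    filter_upwards [hT1] with ω hω
    have : T ω ^ p ≤ T ω := Real.rpow_le_self_of_one_le hω hp1
    rw [Real.norm_of_nonneg (mul_nonneg (by linarith) (by positivity))]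
    nlinarith [Real.rpow_nonneg (zero_le_one.trans hω) p]
  have htangent : (fun ω => Y ω ^ p) ≤ᵐ[μ] q * Y + r := by
    filter_upwards [hT1, hY1] with ω hT hY
    exact Real.rpow_le_tangent hp0 hp1 (by linarith) (by linarith)
  calc μ[fun ω => Y ω ^ p | m]
      ≤ᵐ[μ] μ[q * Y + r | m] := condExp_mono (hY.mono' ?_ ?_) (hqY.add hr) htangent
    _ =ᵐ[μ] μ[q * Y | m] + μ[r | m] := condExp_add hqY hr m
    _ =ᵐ[μ] q * T + r := (condExp_mul_of_stronglyMeasurable_left hqm hqY hY).add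
        (condExp_of_stronglyMeasurable hm hrm hr).eventuallyEq
    _ =ᵐ[μ] fun ω => T ω ^ p := by
        filter_upwards [hT1] with ω hω
        have hT0 : 0 < T ω := by linarith
        simp only [Pi.add_apply, Pi.mul_apply, q, r]
        rw [mul_assoc, ← Real.rpow_add_one hT0.ne']
        ring_nf
  · exact (Real.continuous_rpow_const hp0).comp_aestronglyMeasurable hY.1
  · filter_upwards [hY1] with ω hω
    rw [Real.norm_of_nonneg (by positivity)]
    exact Real.rpow_le_self_of_one_le hω hp1

end CondExp

theorem Real.exp_sum_mul_le_of_exp_le {n : ℕ} {κ ψ r : ℕ → ℝ} {ℓ : ℝ} (hψ0 : ∀ j, 0 ≤ ψ j)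
    (hr : ∀ j, 0 ≤ r j) (h : ∀ j, Real.exp (κ j) ≤ Real.exp ℓ * r j) :
    Real.exp (∑ j ∈ range n, ψ j * κ j)
      ≤ Real.exp (ℓ * ∑ j ∈ range n, ψ j) * ∏ j ∈ range n, r j ^ ψ j := by
  rw [Real.exp_sum, mul_sum, Real.exp_sum, ← prod_mul_distrib]
  refine prod_le_prod (fun j _ => (Real.exp_pos _).le) fun j _ => ?_
  calc Real.exp (ψ j * κ j) = Real.exp (κ j) ^ ψ j := by rw [mul_comm, Real.exp_mul]
    _ ≤ (Real.exp ℓ * r j) ^ ψ j := Real.rpow_le_rpow (Real.exp_pos _).le (h j) (hψ0 j)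
    _ = Real.exp (ℓ * ψ j) * r j ^ ψ j := by
      rw [Real.mul_rpow (Real.exp_pos _).le (hr j), ← Real.exp_mul]

section RiskProcess

variable {Ω : Type*} {m0 : MeasurableSpace Ω} (μ : Measure Ω) (ℱ : Filtration ℕ m0)
  (Y : ℕ → Ω → ℝ) (ψ : ℕ → ℝ)

noncomputable def riskProduct (n : ℕ) (ω : Ω) : ℝ :=
  ∏ j ∈ range n, (Y j ω / μ[Y (j + 1) | ℱ j] ω) ^ ψ j

noncomputable def riskProcess (n : ℕ) (ω : Ω) : ℝ :=
  riskProduct μ ℱ Y ψ n ω * Y n ω ^ ψ n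

variable {μ ℱ Y ψ}

theorem measurable_riskProduct (hY : Adapted ℱ Y) {n i : ℕ} (hni : n ≤ i + 1) :
    Measurable[ℱ i] (riskProduct μ ℱ Y ψ n) := by
  refine Finset.measurable_prod _ fun j hj => ?_
  have hji : j ≤ i := by simp only [mem_range] at hj; omega
  exact (((hY j).mono (ℱ.mono hji) le_rfl).div
    (stronglyMeasurable_condExp.measurable.mono (ℱ.mono hji) le_rfl)).pow_const _

variable [IsFiniteMeasure μ] {C : ℝ}

theorem integrable_rpow_of_adapted (hY : Adapted ℱ Y) (hY1 : ∀ n ω, 1 ≤ Y n ω)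
    (hYC : ∀ n ω, Y n ω ≤ C) {p : ℝ} (hp1 : p ≤ 1) (n : ℕ) :
    Integrable (fun ω => Y n ω ^ p) μ := by
  refine .of_bound (((hY n).pow_const p).mono (ℱ.le n) le_rfl).aestronglyMeasurable C
    (ae_of_all _ fun ω => ?_)
  rw [Real.norm_of_nonneg (Real.rpow_nonneg (by linarith [hY1 n ω]) p)]
  exact (Real.rpow_le_self_of_one_le (hY1 n ω) hp1).trans (hYC n ω)

theorem one_le_condExp_succ (hY : Adapted ℱ Y) (hY1 : ∀ n ω, 1 ≤ Y n ω)
    (hYC : ∀ n ω, Y n ω ≤ C) : ∀ᵐ ω ∂μ, ∀ j, 1 ≤ μ[Y (j + 1) | ℱ j] ω :=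
  ae_all_iff.2 fun j => ae_const_le_condExp (ℱ.le j)
    (by simpa using integrable_rpow_of_adapted hY hY1 hYC le_rfl (j + 1))
    (ae_of_all _ fun ω => hY1 _ ω)

theorem riskProduct_mem_Icc (hY : Adapted ℱ Y) (hY1 : ∀ n ω, 1 ≤ Y n ω)
    (hYC : ∀ n ω, Y n ω ≤ C) (hψ0 : ∀ n, 0 ≤ ψ n) (hψ1 : ∀ n, ψ n ≤ 1) (n : ℕ) :
    ∀ᵐ ω ∂μ, riskProduct μ ℱ Y ψ n ω ∈ Set.Icc 0 (C ^ n) := by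
  filter_upwards [one_le_condExp_succ hY hY1 hYC] with ω hω
  have hfactor : ∀ j, 0 ≤ (Y j ω / μ[Y (j + 1) | ℱ j] ω) ^ ψ j ∧
      (Y j ω / μ[Y (j + 1) | ℱ j] ω) ^ ψ j ≤ C := by
    intro j
    have hY0 : 0 ≤ Y j ω := by linarith [hY1 j ω]
    have hratio : 0 ≤ Y j ω / μ[Y (j + 1) | ℱ j] ω := div_nonneg hY0 (by linarith [hω j])
    refine ⟨by positivity, ?_⟩
    calc (Y j ω / μ[Y (j + 1) | ℱ j] ω) ^ ψ j ≤ Y j ω ^ ψ j :=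
          Real.rpow_le_rpow hratio (div_le_self hY0 (hω j)) (hψ0 j)
      _ ≤ Y j ω := Real.rpow_le_self_of_one_le (hY1 j ω) (hψ1 j)
      _ ≤ C := hYC j ω
  refine ⟨prod_nonneg fun j _ => (hfactor j).1, ?_⟩
  simpa [riskProduct] using
    prod_le_prod (s := range n) (fun j _ => (hfactor j).1) fun j _ => (hfactor j).2

theorem integrable_riskProcess (hY : Adapted ℱ Y) (hY1 : ∀ n ω, 1 ≤ Y n ω)
    (hYC : ∀ n ω, Y n ω ≤ C) (hψ0 : ∀ n, 0 ≤ ψ n) (hψ1 : ∀ n, ψ n ≤ 1) (n : ℕ) :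
    Integrable (riskProcess μ ℱ Y ψ n) μ := by
  refine (integrable_rpow_of_adapted hY hY1 hYC (hψ1 n) n).bdd_mul (c := C ^ n)
    ((measurable_riskProduct hY n.le_succ).mono (ℱ.le n) le_rfl).aestronglyMeasurable ?_
  filter_upwards [riskProduct_mem_Icc hY hY1 hYC hψ0 hψ1 n] with ω hω
  rw [Real.norm_of_nonneg hω.1]; exact hω.2

theorem riskProcess_supermartingale (hY : Adapted ℱ Y) (hY1 : ∀ n ω, 1 ≤ Y n ω)
    (hYC : ∀ n ω, Y n ω ≤ C) (hψ0 : ∀ n, 0 ≤ ψ n) (hψ1 : ∀ n, ψ n ≤ 1) (hψ : Antitone ψ) :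
    Supermartingale (riskProcess μ ℱ Y ψ) ℱ μ := by
  refine supermartingale_nat (fun n => ?_) (integrable_riskProcess hY hY1 hYC hψ0 hψ1)
    fun n => ?_
  · exact ((measurable_riskProduct hY n.le_succ).mul ((hY n).pow_const _)).stronglyMeasurable
  set T := μ[Y (n + 1) | ℱ n]
  set G := riskProduct μ ℱ Y ψ (n + 1)
  have hG : StronglyMeasurable[ℱ n] G := (measurable_riskProduct hY le_rfl).stronglyMeasurable
  have hnext : μ[fun ω => Y (n + 1) ω ^ ψ (n + 1) | ℱ n] ≤ᵐ[μ] fun ω => T ω ^ ψ n :=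
    (condExp_mono (integrable_rpow_of_adapted hY hY1 hYC (hψ1 _) _)
      (integrable_rpow_of_adapted hY hY1 hYC (hψ1 _) _)
      (ae_of_all _ fun ω => Real.rpow_le_rpow_of_exponent_le (hY1 _ ω) (hψ n.le_succ))).trans
    (condExp_rpow_le_rpow_condExp (ℱ.le n) (hψ0 n) (hψ1 n)
      (by simpa using integrable_rpow_of_adapted hY hY1 hYC le_rfl (n + 1))
      (ae_of_all _ fun ω => hY1 _ ω))
  filter_upwards [condExp_mul_of_stronglyMeasurable_left hG
      (integrable_riskProcess hY hY1 hYC hψ0 hψ1 (n + 1))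
      (integrable_rpow_of_adapted hY hY1 hYC (hψ1 _) _),
    hnext, riskProduct_mem_Icc hY hY1 hYC hψ0 hψ1 (n + 1),
    one_le_condExp_succ hY hY1 hYC] with ω hpull hle hG0 hT1
  have hT0 : 0 < T ω := by linarith [hT1 n]
  calc μ[riskProcess μ ℱ Y ψ (n + 1) | ℱ n] ω
      = G ω * μ[fun ω => Y (n + 1) ω ^ ψ (n + 1) | ℱ n] ω := hpull
    _ ≤ G ω * T ω ^ ψ n := mul_le_mul_of_nonneg_left hle hG0.1
    _ = riskProcess μ ℱ Y ψ n ω := by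
      simp only [G, riskProduct, riskProcess, prod_range_succ]
      rw [Real.div_rpow (by linarith [hY1 n ω]) hT0.le, mul_assoc,
        div_mul_cancel₀ _ (Real.rpow_pos_of_pos hT0 _).ne']

theorem riskProduct_le_riskProcess (hY : Adapted ℱ Y) (hY1 : ∀ n ω, 1 ≤ Y n ω)
    (hYC : ∀ n ω, Y n ω ≤ C) (hψ0 : ∀ n, 0 ≤ ψ n) (hψ1 : ∀ n, ψ n ≤ 1) (n : ℕ) :
    riskProduct μ ℱ Y ψ n ≤ᵐ[μ] riskProcess μ ℱ Y ψ n := by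
  filter_upwards [riskProduct_mem_Icc hY hY1 hYC hψ0 hψ1 n] with ω hω
  exact le_mul_of_one_le_right hω.1 (Real.one_le_rpow (hY1 n ω) (hψ0 n))

theorem integral_exp_sum_mul_le (hY : Adapted ℱ Y) (hY1 : ∀ n ω, 1 ≤ Y n ω)
    (hYC : ∀ n ω, Y n ω ≤ C) (hψ0 : ∀ n, 0 ≤ ψ n) (hψ1 : ∀ n, ψ n ≤ 1) (hψ : Antitone ψ)
    {κ : ℕ → Ω → ℝ} {ℓ : ℝ}
    (hκ : ∀ j, ∀ᵐ ω ∂μ, Real.exp (κ j ω) ≤ Real.exp ℓ * (Y j ω / μ[Y (j + 1) | ℱ j] ω))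
    (n : ℕ) :
    ∫ ω, Real.exp (∑ j ∈ range n, ψ j * κ j ω) ∂μ
      ≤ Real.exp (ℓ * ∑ j ∈ range n, ψ j) * ∫ ω, Y 0 ω ^ ψ 0 ∂μ := by
  set S := Real.exp (ℓ * ∑ j ∈ range n, ψ j)
  have hA := riskProcess_supermartingale (μ := μ) hY hY1 hYC hψ0 hψ1 hψ
  have hpointwise : ∀ᵐ ω ∂μ,
      Real.exp (∑ j ∈ range n, ψ j * κ j ω) ≤ S * riskProcess μ ℱ Y ψ n ω := by
    filter_upwards [ae_all_iff.2 hκ, one_le_condExp_succ hY hY1 hYC,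
      riskProduct_le_riskProcess hY hY1 hYC hψ0 hψ1 n] with ω hκω hT1 hGA
    have hratio : ∀ j, 0 ≤ Y j ω / μ[Y (j + 1) | ℱ j] ω := fun j =>
      div_nonneg (zero_le_one.trans (hY1 j ω)) (zero_le_one.trans (hT1 j))
    exact (Real.exp_sum_mul_le_of_exp_le hψ0 hratio hκω).trans
      (mul_le_mul_of_nonneg_left hGA (Real.exp_pos _).le)
  calc _ ≤ ∫ ω, S * riskProcess μ ℱ Y ψ n ω ∂μ :=
        integral_mono_of_nonneg (ae_of_all _ fun _ => (Real.exp_pos _).le)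
          ((hA.integrable n).const_mul S) hpointwise
    _ = S * ∫ ω, riskProcess μ ℱ Y ψ n ω ∂μ := integral_const_mul S _
    _ ≤ S * ∫ ω, riskProcess μ ℱ Y ψ 0 ω ∂μ := by
        refine mul_le_mul_of_nonneg_left ?_ (Real.exp_pos _).le
        simpa using hA.setIntegral_le n.zero_le MeasurableSet.univ
    _ = S * ∫ ω, Y 0 ω ^ ψ 0 ∂μ := by simp [riskProcess, riskProduct]

end RiskProcess

theorem risk_sensitive_discounted_bound_general
    {Ω E U : Type*} {m0 : MeasurableSpace Ω} [MeasurableSpace E]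
    (μ : Measure Ω) [IsProbabilityMeasure μ]
    (ℱ : Filtration ℕ m0)
    (X : ℕ → Ω → E) (hX : ∀ i, Measurable[ℱ i] (X i))
    (a : ℕ → Ω → U)
    (c : E → U → ℝ)
    (w : E → ℝ) (hwm : Measurable w)
    (hw0 : ∀ y, 0 ≤ w y) (W : ℝ) (hwb : ∀ y, w y ≤ W)
    (γ lam : ℝ)
    (x : E) (hstart : ∀ᵐ ω ∂μ, X 0 ω = x)
    (hsub : ∀ i, ∀ᵐ ω ∂μ,
      Real.exp (γ * c (X i ω) (a i ω))
        ≤ Real.exp (w (X i ω) + γ * lam)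
            / (μ[(fun ω' => Real.exp (w (X (i + 1) ω'))) | ℱ i]) ω)
    (φ : ℕ → ℝ) (hφpos : ∀ i, 0 < φ i) (hφle : ∀ i, φ i ≤ 1)
    (hφmono : ∀ i j, i ≤ j → φ j ≤ φ i)
    (k n : ℕ) (hn : 1 ≤ n) :
    ∫ ω, Real.exp (γ * ∑ i ∈ Finset.Ico k (n + k),
        φ i * c (X (i - k) ω) (a (i - k) ω)) ∂μ
      ≤ Real.exp (γ * lam * ∑ i ∈ Finset.Ico k (n + k), φ i)
          * Real.exp (φ k * w x)
          * Real.exp (W * (φ k - φ (n + k - 1))) := by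
  set ψ : ℕ → ℝ := fun j => φ (k + j)
  set Y : ℕ → Ω → ℝ := fun j ω => Real.exp (w (X j ω))
  have hbound := integral_exp_sum_mul_le (μ := μ) (ℱ := ℱ) (Y := Y) (ψ := ψ)
    (fun j => (hwm.comp (hX j)).exp) (fun j ω => Real.one_le_exp (hw0 _))
    (fun j ω => Real.exp_le_exp.2 (hwb _)) (fun j => (hφpos _).le) (fun j => hφle _)
    (fun i j hij => hφmono _ _ (by omega)) (κ := fun j ω => γ * c (X j ω) (a j ω))
    (ℓ := γ * lam) (fun j => (hsub j).mono fun ω h => h.trans_eq (by rw [Real.exp_add]; ring)) n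
  have hreindex : ∀ ω, γ * ∑ i ∈ Ico k (n + k), φ i * c (X (i - k) ω) (a (i - k) ω)
      = ∑ j ∈ range n, ψ j * (γ * c (X j ω) (a j ω)) := fun ω => by
    rw [sum_Ico_eq_sum_range, mul_sum, Nat.add_sub_cancel]
    refine sum_congr rfl fun j _ => ?_
    rw [Nat.add_sub_cancel_left]
    ring
  have hφsum : ∑ i ∈ Ico k (n + k), φ i = ∑ j ∈ range n, ψ j := by
    rw [sum_Ico_eq_sum_range, Nat.add_sub_cancel]
  have hstart_integral : ∫ ω, Y 0 ω ^ ψ 0 ∂μ = Real.exp (φ k * w x) := by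
    have h : (fun ω => Y 0 ω ^ ψ 0) =ᵐ[μ] fun _ => Real.exp (φ k * w x) :=
      hstart.mono fun ω hω => by simp only [Y, ψ, hω, add_zero, ← Real.exp_mul, mul_comm]
    simp [integral_congr_ae h]
  simp_rw [hreindex, hφsum, ← hstart_integral]
  refine hbound.trans (le_mul_of_one_le_right (by positivity) (Real.one_le_exp ?_))
  nlinarith [hφmono k (n + k - 1) (by omega), hw0 x, hwb x]

/-- Risk-sensitive discounted bound: if `w ≥ 0` is bounded by `W`, `γ > 0`, and the
multiplicative sub-solution inequality
`e^{γ c(X_i,a_i)} ≤ e^{w(X_i) + γ λ^γ} / E[e^{w(X_{i+1})} | F_i]` holds a.s., then for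
nonincreasing `φ : ℕ → (0,1]`,
`E_{k,x}[exp(γ Σ_{i=k}^{n+k-1} φ(i) c(X_{i-k},a_{i-k}))]
  ≤ exp(γ λ^γ Σ φ(i)) · exp(φ(k) w(x)) · exp(‖w‖ (φ(k) − φ(n+k−1)))`. -/
theorem risk_sensitive_discounted_bound
    {Ω E U : Type*} {m0 : MeasurableSpace Ω} [MeasurableSpace E]
    (μ : Measure Ω) [IsProbabilityMeasure μ]
    (ℱ : Filtration ℕ m0)
    (X : ℕ → Ω → E) (hX : ∀ i, Measurable[ℱ i] (X i))
    (a : ℕ → Ω → U)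
    (c : E → U → ℝ) (Cc : ℝ) (hcb : ∀ y u, |c y u| ≤ Cc)
    (w : E → ℝ) (hwm : Measurable w)
    (hw0 : ∀ y, 0 ≤ w y) (W : ℝ) (hwb : ∀ y, w y ≤ W)
    (γ lam : ℝ) (hγ : 0 < γ)
    (x : E) (hstart : ∀ᵐ ω ∂μ, X 0 ω = x)
    (hsub : ∀ i, ∀ᵐ ω ∂μ,
      Real.exp (γ * c (X i ω) (a i ω))
        ≤ Real.exp (w (X i ω) + γ * lam)
            / (μ[(fun ω' => Real.exp (w (X (i + 1) ω'))) | ℱ i]) ω)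
    (φ : ℕ → ℝ) (hφpos : ∀ i, 0 < φ i) (hφle : ∀ i, φ i ≤ 1)
    (hφmono : ∀ i j, i ≤ j → φ j ≤ φ i)
    (k n : ℕ) (hn : 1 ≤ n) :
    ∫ ω, Real.exp (γ * ∑ i ∈ Finset.Ico k (n + k),
        φ i * c (X (i - k) ω) (a (i - k) ω)) ∂μ
      ≤ Real.exp (γ * lam * ∑ i ∈ Finset.Ico k (n + k), φ i)
          * Real.exp (φ k * w x)
          * Real.exp (W * (φ k - φ (n + k - 1))) :=
  risk_sensitive_discounted_bound_general μ ℱ X hX a c w hwm hw0 W hwb γ lam x hstart hsub φ hφpos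
    hφle hφmono k n hn
end
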